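/- arXiv:0907.5030 — 5 statements merged into one kernel-verified Lean document; each statement's English description precedes it below -/
import Mathlib

section
/- Let u_1, …, u_5 be linearly independent vectors in a finite-dimensional vector space over a finite field of odd characteristic, and define the thirteen one-dimensional subspaces Z_i = ⟨u_i⟩ for i = 1,…,5, V_1 = ⟨u_1+u_2+u_3⟩, V_2 = ⟨u_3+u_4+u_5⟩, V_3 = ⟨u_1+u_2⟩, V_4 = ⟨u_1+u_3⟩, V_5 = ⟨u_2+u_3⟩, V_6 = ⟨u_3+u_4⟩, V_7 = ⟨u_3+u_5⟩, V_8 = ⟨u_4+u_5⟩. Let Φ_2 be the rank function on the ground set X_2 = {Z_1,…,Z_5,V_1,…,V_8} given by Φ_2(A) = dim(span of the union of the subspaces in A). Then the matroid (X_2, Φ_2) is odd representable but is not almost even representable. -/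
open Module Filter Topology

/-- A representation of a rank function on ground set `X` by subspaces of a
finite-dimensional vector space `W` over a finite field `F`. -/
structure SubspaceRep {X : Type} (h : Finset X → ℝ) where
  F : Type
  W : Type
  [fieldF : Field F]
  [fintypeF : Fintype F]
  [addCommGroupW : AddCommGroup W]
  [moduleW : Module F W]
  [finiteDimensionalW : FiniteDimensional F W]
  V : X → Submodule F W
  rank_eq : ∀ A : Finset X, h A = (Module.finrank F ↥(A.sup V) : ℝ)

/-- `h` is representable: it is `q`-representable for some prime power `q`
(equivalently, it is given by subspace dimensions over some finite field). -/
def IsRepresentable {X : Type} (h : Finset X → ℝ) : Prop := Nonempty (SubspaceRep h)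

/-- `h` is even representable: `2^m`-representable for some positive integer `m`. -/
def EvenRepresentable {X : Type} (h : Finset X → ℝ) : Prop :=
  ∃ (r : SubspaceRep h) (m : ℕ), 0 < m ∧ Nat.card r.F = 2 ^ m

/-- `h` is odd representable: `p^m`-representable for some odd prime `p` and positive `m`. -/
def OddRepresentable {X : Type} (h : Finset X → ℝ) : Prop :=
  ∃ (r : SubspaceRep h) (p m : ℕ), p.Prime ∧ Odd p ∧ 0 < m ∧ Nat.card r.F = p ^ m

/-- Polymatroid axioms: normalization, nonnegativity, monotonicity, submodularity. -/
def IsPolymatroid {X : Type} [DecidableEq X] (h : Finset X → ℝ) : Prop :=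
  h ∅ = 0 ∧ (∀ A, 0 ≤ h A) ∧ (∀ A B : Finset X, A ⊆ B → h A ≤ h B) ∧
    ∀ A B : Finset X, h (A ∪ B) + h (A ∩ B) ≤ h A + h B

/-- The Ingleton expression `J_h(A1,A2,A3,A4)`. -/
noncomputable def ingletonJ {X : Type} [DecidableEq X] (h : Finset X → ℝ)
    (A1 A2 A3 A4 : Finset X) : ℝ :=
  h (A1 ∪ A2) + h (A1 ∪ A3) + h (A1 ∪ A4) + h (A2 ∪ A3) + h (A2 ∪ A4)
    - h A1 - h A2 - h (A3 ∪ A4) - h (A1 ∪ A2 ∪ A3) - h (A1 ∪ A2 ∪ A4)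

/-- `h` is Ingletonian if all Ingleton expressions are nonnegative. -/
def IsIngletonian {X : Type} [DecidableEq X] (h : Finset X → ℝ) : Prop :=
  ∀ A1 A2 A3 A4 : Finset X, 0 ≤ ingletonJ h A1 A2 A3 A4

/-- The convex cone generated by a set `S` of rank functions (viewed as points of
`ℝ^{2^|X|}`): all finite nonnegative combinations of elements of `S`. -/
def coneHull {X : Type} (S : Set (Finset X → ℝ)) : Set (Finset X → ℝ) :=
  {x | ∃ (m : ℕ) (c : Fin m → ℝ) (f : Fin m → Finset X → ℝ),
    (∀ i, 0 ≤ c i) ∧ (∀ i, f i ∈ S) ∧ x = ∑ i, c i • f i}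

/-- `h` is almost representable: a coordinatewise limit `h = lim_i c_i g_i` with
`c_i > 0` and each `g_i` representable. -/
def AlmostRepresentable {X : Type} (h : Finset X → ℝ) : Prop :=
  ∃ (g : ℕ → Finset X → ℝ) (c : ℕ → ℝ), (∀ i, IsRepresentable (g i)) ∧
    (∀ i, 0 < c i) ∧ ∀ A : Finset X, Tendsto (fun i => c i * g i A) atTop (𝓝 (h A))

/-- `h` is almost even representable. -/
def AlmostEvenRepresentable {X : Type} (h : Finset X → ℝ) : Prop :=
  ∃ (g : ℕ → Finset X → ℝ) (c : ℕ → ℝ), (∀ i, EvenRepresentable (g i)) ∧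
    (∀ i, 0 < c i) ∧ ∀ A : Finset X, Tendsto (fun i => c i * g i A) atTop (𝓝 (h A))

/-- `h` is almost odd representable. -/
def AlmostOddRepresentable {X : Type} (h : Finset X → ℝ) : Prop :=
  ∃ (g : ℕ → Finset X → ℝ) (c : ℕ → ℝ), (∀ i, OddRepresentable (g i)) ∧
    (∀ i, 0 < c i) ∧ ∀ A : Finset X, Tendsto (fun i => c i * g i A) atTop (𝓝 (h A))

/-- `h` is cc-representable: it lies in the closure of the convex cone generated by
the set `Υ[X]` of representable rank functions on `X`. -/
def CcRepresentable {X : Type} (h : Finset X → ℝ) : Prop :=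
  h ∈ closure (coneHull {g : Finset X → ℝ | IsRepresentable g})

/-- A matroid: an integer-valued polymatroid with `h(A) ≤ |A|`. -/
def IsIntMatroid {X : Type} [DecidableEq X] (h : Finset X → ℝ) : Prop :=
  IsPolymatroid h ∧ (∀ A : Finset X, ∃ z : ℤ, h A = (z : ℝ)) ∧ ∀ A : Finset X, h A ≤ A.card

/-- A circuit of a matroid: a minimal dependent set. -/
def IsCircuit {X : Type} (h : Finset X → ℝ) (C : Finset X) : Prop :=
  h C < C.card ∧ ∀ D : Finset X, D ⊂ C → h D = D.card

/-- A connected matroid: every pair of distinct elements lies in a common circuit. -/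
def IsConnectedMatroid {X : Type} [DecidableEq X] (h : Finset X → ℝ) : Prop :=
  IsIntMatroid h ∧ ∀ x y : X, x ≠ y → ∃ C : Finset X, IsCircuit h C ∧ x ∈ C ∧ y ∈ C


section AuxSecondMatroid
open Module Submodule Set Filter


private lemma eq_of_add_zero {W : Type} [AddCommGroup W] (h2 : ∀ x : W, x + x = 0)
    {x y : W} (h : x + y = 0) : x = y := by
  have hxy : x - y = (x + y) - (y + y) := by abel
  rw [h, h2 y, sub_zero] at hxy
  exact sub_eq_zero.mp hxy

lemma keyIncl {F W : Type} [Field F] [AddCommGroup W] [Module F W]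
    (h2 : ∀ x : W, x + x = 0)
    (z1 z2 z3 v3 v4 v5 : Submodule F W)
    (hv3 : v3 ≤ z1 ⊔ z2) (hv4 : v4 ≤ z1 ⊔ z3) (hv5 : v5 ≤ z2 ⊔ z3) :
    (v3 ⊔ z3) ⊓ ((v4 ⊔ z2) ⊓ (v5 ⊔ z1)) ≤
      z1 ⊔ (v5 ⊓ ((v3 ⊔ v4) ⊔ (((z1 ⊔ z2) ⊓ (z1 ⊔ z3)) ⊓ (z2 ⊔ z3)))) := by
  intro t ht
  rw [Submodule.mem_inf, Submodule.mem_inf] at ht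
  obtain ⟨ht1, ht2, ht3⟩ := ht
  obtain ⟨a, ha, r, hr, har⟩ := Submodule.mem_sup.mp ht1
  obtain ⟨b, hb, s, hs, hbs⟩ := Submodule.mem_sup.mp ht2
  obtain ⟨cc, hcc, q, hq, hcq⟩ := Submodule.mem_sup.mp ht3
  -- e := cc + a + b
  have hab : a + b = r + s := by
    apply eq_of_add_zero h2
    calc a + b + (r + s) = (a + r) + (b + s) := by abel
      _ = t + t := by rw [har, hbs]
      _ = 0 := h2 t
  have hcb : cc + b = q + s := by
    apply eq_of_add_zero h2
    calc cc + b + (q + s) = (cc + q) + (b + s) := by abel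
      _ = t + t := by rw [hcq, hbs]
      _ = 0 := h2 t
  have hca : cc + a = q + r := by
    apply eq_of_add_zero h2
    calc cc + a + (q + r) = (cc + q) + (a + r) := by abel
      _ = t + t := by rw [hcq, har]
      _ = 0 := h2 t
  set e := cc + a + b with he
  have he23 : e ∈ z2 ⊔ z3 := by
    have : e = cc + (r + s) := by rw [he, add_assoc, hab]
    rw [this]
    exact add_mem (hv5 hcc) (add_mem (Submodule.mem_sup_right hr) (Submodule.mem_sup_left hs))
  have he12 : e ∈ z1 ⊔ z2 := by
    have : e = a + (q + s) := by rw [he, ← hcb]; abel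
    rw [this]
    exact add_mem (hv3 ha) (add_mem (Submodule.mem_sup_left hq) (Submodule.mem_sup_right hs))
  have he13 : e ∈ z1 ⊔ z3 := by
    have : e = b + (q + r) := by rw [he, ← hca]; abel
    rw [this]
    exact add_mem (hv4 hb) (add_mem (Submodule.mem_sup_left hq) (Submodule.mem_sup_right hr))
  have hccmem : cc ∈ v5 ⊓ ((v3 ⊔ v4) ⊔ (((z1 ⊔ z2) ⊓ (z1 ⊔ z3)) ⊓ (z2 ⊔ z3))) := by
    rw [Submodule.mem_inf]
    refine ⟨hcc, ?_⟩
    have hcceq : cc = (a + b) + e := by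
      rw [he]
      have ha2 := h2 a; have hb2 := h2 b
      calc cc = cc + ((a + a) + (b + b)) := by rw [ha2, hb2, add_zero, add_zero]
        _ = a + b + (cc + a + b) := by abel
    rw [hcceq]
    refine add_mem (Submodule.mem_sup_left (add_mem (Submodule.mem_sup_left ha) (Submodule.mem_sup_right hb))) ?_
    exact Submodule.mem_sup_right (Submodule.mem_inf.mpr ⟨Submodule.mem_inf.mpr ⟨he12, he13⟩, he23⟩)
  have : t = q + cc := by rw [← hcq]; abel
  rw [this]
  exact add_mem (Submodule.mem_sup_left hq) (Submodule.mem_sup_right hccmem)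

set_option maxHeartbeats 2000000 in
lemma mainEstimate {F W : Type} [Field F] [AddCommGroup W] [Module F W]
    (h2 : ∀ x : W, x + x = 0)
    (z1 z2 z3 v1 v3 v4 v5 : Submodule F W)
    (d : Submodule F W → ℝ)
    (hmono : ∀ {U V : Submodule F W}, U ≤ V → d U ≤ d V)
    (hsub : ∀ U V : Submodule F W, d (U ⊔ V) + d (U ⊓ V) = d U + d V)
    (hnn : ∀ U : Submodule F W, 0 ≤ d U)
    (e_z1 : |d z1 - 1| < 1/100)
    (e_v1 : |d v1 - 1| < 1/100)
    (e_v3 : |d v3 - 1| < 1/100)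
    (e_v4 : |d v4 - 1| < 1/100)
    (e_v5 : |d v5 - 1| < 1/100)
    (e_z12 : |d (z1 ⊔ z2) - 2| < 1/100)
    (e_z13 : |d (z1 ⊔ z3) - 2| < 1/100)
    (e_z23 : |d (z2 ⊔ z3) - 2| < 1/100)
    (e_z123 : |d (z1 ⊔ (z2 ⊔ z3)) - 3| < 1/100)
    (e_v3z12 : |d (v3 ⊔ (z1 ⊔ z2)) - 2| < 1/100)
    (e_v4z13 : |d (v4 ⊔ (z1 ⊔ z3)) - 2| < 1/100)
    (e_v5z23 : |d (v5 ⊔ (z2 ⊔ z3)) - 2| < 1/100)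
    (e_v3z3 : |d (v3 ⊔ z3) - 2| < 1/100)
    (e_v4z2 : |d (v4 ⊔ z2) - 2| < 1/100)
    (e_v5z1 : |d (v5 ⊔ z1) - 2| < 1/100)
    (e_v1v3z3 : |d (v1 ⊔ (v3 ⊔ z3)) - 2| < 1/100)
    (e_v1v4z2 : |d (v1 ⊔ (v4 ⊔ z2)) - 2| < 1/100)
    (e_v1v5z1 : |d (v1 ⊔ (v5 ⊔ z1)) - 2| < 1/100)
    (e_v1z1 : |d (v1 ⊔ z1) - 2| < 1/100)
    (e_v3v4 : |d (v3 ⊔ v4) - 2| < 1/100)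
    (e_v3v4v5 : |d (v3 ⊔ (v4 ⊔ v5)) - 3| < 1/100) : False := by
  rw [abs_lt] at e_z1 e_v1 e_v3 e_v4 e_v5 e_z12 e_z13 e_z23 e_z123 e_v3z12 e_v4z13 e_v5z23 e_v3z3 e_v4z2 e_v5z1 e_v1v3z3 e_v1v4z2 e_v1v5z1 e_v1z1 e_v3v4 e_v3v4v5
  obtain ⟨ez1l, ez1r⟩ := e_z1
  obtain ⟨ev1l, ev1r⟩ := e_v1
  obtain ⟨ev3l, ev3r⟩ := e_v3
  obtain ⟨ev4l, ev4r⟩ := e_v4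
  obtain ⟨ev5l, ev5r⟩ := e_v5
  obtain ⟨e_z12l, e_z12r⟩ := e_z12
  obtain ⟨e_z13l, e_z13r⟩ := e_z13
  obtain ⟨e_z23l, e_z23r⟩ := e_z23
  obtain ⟨e_z123l, e_z123r⟩ := e_z123
  obtain ⟨e_v3z12l, e_v3z12r⟩ := e_v3z12
  obtain ⟨e_v4z13l, e_v4z13r⟩ := e_v4z13
  obtain ⟨e_v5z23l, e_v5z23r⟩ := e_v5z23
  obtain ⟨e_v3z3l, e_v3z3r⟩ := e_v3z3
  obtain ⟨e_v4z2l, e_v4z2r⟩ := e_v4z2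
  obtain ⟨e_v5z1l, e_v5z1r⟩ := e_v5z1
  obtain ⟨e_v1v3z3l, e_v1v3z3r⟩ := e_v1v3z3
  obtain ⟨e_v1v4z2l, e_v1v4z2r⟩ := e_v1v4z2
  obtain ⟨e_v1v5z1l, e_v1v5z1r⟩ := e_v1v5z1
  obtain ⟨e_v1z1l, e_v1z1r⟩ := e_v1z1
  obtain ⟨e_v3v4l, e_v3v4r⟩ := e_v3v4
  obtain ⟨e_v3v4v5l, e_v3v4v5r⟩ := e_v3v4v5
  -- pruned subspaces
  set v3' := v3 ⊓ (z1 ⊔ z2) with hv3'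
  set v4' := v4 ⊓ (z1 ⊔ z3) with hv4'
  set v5' := v5 ⊓ (z2 ⊔ z3) with hv5'
  -- Step 1 : d v3' etc
  have s3 := hsub v3 (z1 ⊔ z2)
  have s4 := hsub v4 (z1 ⊔ z3)
  have s5 := hsub v5 (z2 ⊔ z3)
  have F3 : d v3' ≥ 1 - 3/100 := by rw [hv3']; linarith [e_z12l, e_v3z12r]
  have F4 : d v4' ≥ 1 - 3/100 := by rw [hv4']; linarith [e_z13l, e_v4z13r]
  have F5 : d v5' ≥ 1 - 3/100 := by rw [hv5']; linarith [e_z23l, e_v5z23r]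
  -- Step 2 : d (v3' ⊔ z3) ≥ 2 - 5/100 and analogues
  have sup_prune : ∀ (A B C : Submodule F W), d (A ⊔ C) ≤ d A - d (A ⊓ B) + d ((A ⊓ B) ⊔ C) := by
    intro A B C
    have h1 : A ⊔ C = A ⊔ ((A ⊓ B) ⊔ C) := by
      rw [← sup_assoc, sup_inf_self]
    have h2' := hsub A ((A ⊓ B) ⊔ C)
    have h3 : d (A ⊓ B) ≤ d (A ⊓ ((A ⊓ B) ⊔ C)) :=
      hmono (le_inf inf_le_left le_sup_left)
    rw [← h1] at h2'
    linarith
  have G3 : d (v3' ⊔ z3) ≥ 2 - 5/100 := by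
    have := sup_prune v3 (z1 ⊔ z2) z3
    rw [← hv3'] at this
    linarith [e_v3z3l]
  have G4 : d (v4' ⊔ z2) ≥ 2 - 5/100 := by
    have := sup_prune v4 (z1 ⊔ z3) z2
    rw [← hv4'] at this
    linarith [e_v4z2l]
  have G5 : d (v5' ⊔ z1) ≥ 2 - 5/100 := by
    have := sup_prune v5 (z2 ⊔ z3) z1
    rw [← hv5'] at this
    linarith [e_v5z1l]
  -- Step 3 : d (v1 ⊓ (v3' ⊔ z3)) ≥ 1 - 7/100 and analogues
  have T3 : d (v1 ⊓ (v3' ⊔ z3)) ≥ 1 - 7/100 := by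
    have hs := hsub v1 (v3' ⊔ z3)
    have hmle : d (v1 ⊔ (v3' ⊔ z3)) ≤ d (v1 ⊔ (v3 ⊔ z3)) :=
      hmono (sup_le_sup_left (sup_le_sup_right inf_le_left _) _)
    linarith [e_v1v3z3r]
  have T4 : d (v1 ⊓ (v4' ⊔ z2)) ≥ 1 - 7/100 := by
    have hs := hsub v1 (v4' ⊔ z2)
    have hmle : d (v1 ⊔ (v4' ⊔ z2)) ≤ d (v1 ⊔ (v4 ⊔ z2)) :=
      hmono (sup_le_sup_left (sup_le_sup_right inf_le_left _) _)
    linarith [e_v1v4z2r]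
  have T5 : d (v1 ⊓ (v5' ⊔ z1)) ≥ 1 - 7/100 := by
    have hs := hsub v1 (v5' ⊔ z1)
    have hmle : d (v1 ⊔ (v5' ⊔ z1)) ≤ d (v1 ⊔ (v5 ⊔ z1)) :=
      hmono (sup_le_sup_left (sup_le_sup_right inf_le_left _) _)
    linarith [e_v1v5z1r]
  -- dInf3
  have dinf3 : ∀ A B C : Submodule F W, d (A ⊓ B) + d (A ⊓ C) - d A ≤ d (A ⊓ (B ⊓ C)) := by
    intro A B C
    have h1 := hsub (A ⊓ B) (A ⊓ C)
    have heq : (A ⊓ B) ⊓ (A ⊓ C) = A ⊓ (B ⊓ C) := (inf_inf_distrib_left A B C).symm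
    have hle := hmono (sup_le inf_le_left inf_le_left : (A ⊓ B) ⊔ (A ⊓ C) ≤ A)
    rw [heq] at h1
    linarith
  set B1 := v3' ⊔ z3 with hB1
  set B2 := v4' ⊔ z2 with hB2
  set B3 := v5' ⊔ z1 with hB3
  have g1 : d (v1 ⊓ (B2 ⊓ B3)) ≥ 1 - 15/100 := by
    have := dinf3 v1 B2 B3; linarith
  have g2 : d (v1 ⊓ (B1 ⊓ (B2 ⊓ B3))) ≥ 1 - 23/100 := by
    have := dinf3 v1 B1 (B2 ⊓ B3); linarith
  set v1' := v1 ⊓ (B1 ⊓ (B2 ⊓ B3)) with hv1'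
  -- apply keyIncl
  set E := ((z1 ⊔ z2) ⊓ (z1 ⊔ z3)) ⊓ (z2 ⊔ z3) with hE
  set Y := v5 ⊓ ((v3 ⊔ v4) ⊔ E) with hY
  have hkey : v1' ≤ z1 ⊔ Y := by
    have h0 : B1 ⊓ (B2 ⊓ B3) ≤ z1 ⊔ (v5' ⊓ ((v3' ⊔ v4') ⊔ E)) :=
      keyIncl h2 z1 z2 z3 v3' v4' v5' inf_le_right inf_le_right inf_le_right
    refine le_trans (le_trans inf_le_right h0) (sup_le_sup_left ?_ _)
    exact inf_le_inf inf_le_left (sup_le_sup (sup_le_sup inf_le_left inf_le_left) le_rfl)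
  -- Step 6 : d Y ≥ 1 - 26/100
  have hv1z1 : d (v1 ⊓ z1) ≤ 3/100 := by
    have := hsub v1 z1; linarith [e_v1z1l]
  have H6 : d Y ≥ 1 - 26/100 := by
    have s6 := hsub v1' z1
    have m1 : d (v1' ⊓ z1) ≤ d (v1 ⊓ z1) := hmono (inf_le_inf_right z1 inf_le_left)
    have m2 : d (v1' ⊔ z1) ≤ d (z1 ⊔ Y) := hmono (sup_le hkey le_sup_left)
    have s7 := hsub z1 Y
    have := hnn (z1 ⊓ Y)
    linarith
  -- Step 7 : d E ≤ 5/100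
  have HE : d E ≤ 5/100 := by
    have sQ := hsub (z1 ⊔ z2) (z1 ⊔ z3)
    have mQ : d (z1 ⊔ (z2 ⊔ z3)) ≤ d ((z1 ⊔ z2) ⊔ (z1 ⊔ z3)) := by
      apply hmono
      refine sup_le (le_trans le_sup_left le_sup_left) (sup_le ?_ ?_)
      · exact le_trans le_sup_right le_sup_left
      · exact le_trans le_sup_right le_sup_right
    have sE := hsub ((z1 ⊔ z2) ⊓ (z1 ⊔ z3)) (z2 ⊔ z3)
    have mE : d (z1 ⊔ (z2 ⊔ z3)) ≤ d (((z1 ⊔ z2) ⊓ (z1 ⊔ z3)) ⊔ (z2 ⊔ z3)) := by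
      apply hmono
      exact sup_le (le_trans (le_inf le_sup_left le_sup_left) le_sup_left) le_sup_right
    rw [← hE] at sE
    linarith [e_z123l, e_z12r, e_z13r, e_z123l]
  -- Step 8/9 : final contradiction
  have HA : d ((v3 ⊔ v4) ⊔ E) ≤ 2 + 6/100 := by
    have := hsub (v3 ⊔ v4) E
    have := hnn ((v3 ⊔ v4) ⊓ E)
    linarith [e_v3v4r]
  have s9 := hsub v5 ((v3 ⊔ v4) ⊔ E)
  rw [← hY] at s9
  have m9 : d (v3 ⊔ (v4 ⊔ v5)) ≤ d (v5 ⊔ ((v3 ⊔ v4) ⊔ E)) := by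
    apply hmono
    refine sup_le ?_ (sup_le ?_ le_sup_left)
    · exact le_trans le_sup_left (le_trans le_sup_left le_sup_right)
    · exact le_trans le_sup_right (le_trans le_sup_left le_sup_right)
  linarith [e_v3v4v5l]


lemma li_of_coords {K W : Type} [Field K] [AddCommGroup W] [Module K W]
    {u : Fin 5 → W} (hu : LinearIndependent K u) {k : ℕ} (M : Fin k → Fin 5 → K)
    (hM : ∀ g : Fin k → K, (∀ i : Fin 5, ∑ j, g j * M j i = 0) → ∀ j, g j = 0) :
    LinearIndependent K (fun j => ∑ i, M j i • u i) := by
  rw [Fintype.linearIndependent_iff]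
  intro g hg
  have key : ∑ i : Fin 5, (∑ j, g j * M j i) • u i = 0 := by
    rw [← hg]
    simp_rw [Finset.sum_smul, Finset.smul_sum, smul_smul]
    rw [Finset.sum_comm]
  exact hM g (Fintype.linearIndependent_iff.mp hu _ key)

lemma li_convert {K W : Type} [Field K] [AddCommGroup W] [Module K W]
    {u : Fin 5 → W} (hu : LinearIndependent K u) {k : ℕ} (M : Fin k → Fin 5 → K)
    (v : Fin k → W) (hv : ∀ j, v j = ∑ i, M j i • u i)
    (hM : ∀ g : Fin k → K, (∀ i : Fin 5, ∑ j, g j * M j i = 0) → ∀ j, g j = 0) :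
    LinearIndependent K v := by
  have h : v = fun j => ∑ i, M j i • u i := funext hv
  rw [h]; exact li_of_coords hu M hM

lemma rank_helper {K W : Type} [Field K] [AddCommGroup W] [Module K W] [FiniteDimensional K W]
    (T : Submodule K W) {k : ℕ} (w : Fin k → W) (hw : LinearIndependent K w)
    (h1 : ∀ j, w j ∈ T) (h2 : T ≤ Submodule.span K (Set.range w)) :
    Module.finrank K ↥T = k := by
  have hspan := finrank_span_eq_card hw
  refine le_antisymm ?_ ?_
  · have hm := Submodule.finrank_mono h2
    rw [hspan, Fintype.card_fin] at hm; exact hm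
  · have hle : Submodule.span K (Set.range w) ≤ T :=
      Submodule.span_le.mpr (Set.range_subset_iff.mpr h1)
    have hm := Submodule.finrank_mono hle
    rw [hspan, Fintype.card_fin] at hm; exact hm


lemma li0 {K W : Type} [Field K] [AddCommGroup W] [Module K W]
    {u : Fin 5 → W} (hu : LinearIndependent K u) :
    LinearIndependent K ![u 0] := by
  apply li_convert hu ![![1,0,0,0,0]]
  · intro j; fin_cases j <;> simp [Fin.sum_univ_five]
  · intro g hg j
    have h0 := hg 0; have h1 := hg 1; have h2 := hg 2
    simp [Fin.sum_univ_one, Fin.sum_univ_two, Fin.sum_univ_three, Matrix.cons_val_succ, Matrix.vecHead, Matrix.vecTail] at h0 h1 h2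
    fin_cases j
    · exact h0

lemma li5 {K W : Type} [Field K] [AddCommGroup W] [Module K W]
    {u : Fin 5 → W} (hu : LinearIndependent K u) :
    LinearIndependent K ![u 0 + u 1 + u 2] := by
  apply li_convert hu ![![1,1,1,0,0]]
  · intro j; fin_cases j <;> simp [Fin.sum_univ_five]
  · intro g hg j
    have h0 := hg 0; have h1 := hg 1; have h2 := hg 2
    simp [Fin.sum_univ_one, Fin.sum_univ_two, Fin.sum_univ_three, Matrix.cons_val_succ, Matrix.vecHead, Matrix.vecTail] at h0 h1 h2
    fin_cases j
    · exact h0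

lemma li7 {K W : Type} [Field K] [AddCommGroup W] [Module K W]
    {u : Fin 5 → W} (hu : LinearIndependent K u) :
    LinearIndependent K ![u 0 + u 1] := by
  apply li_convert hu ![![1,1,0,0,0]]
  · intro j; fin_cases j <;> simp [Fin.sum_univ_five]
  · intro g hg j
    have h0 := hg 0; have h1 := hg 1; have h2 := hg 2
    simp [Fin.sum_univ_one, Fin.sum_univ_two, Fin.sum_univ_three, Matrix.cons_val_succ, Matrix.vecHead, Matrix.vecTail] at h0 h1 h2
    fin_cases j
    · exact h0

lemma li8 {K W : Type} [Field K] [AddCommGroup W] [Module K W]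
    {u : Fin 5 → W} (hu : LinearIndependent K u) :
    LinearIndependent K ![u 0 + u 2] := by
  apply li_convert hu ![![1,0,1,0,0]]
  · intro j; fin_cases j <;> simp [Fin.sum_univ_five]
  · intro g hg j
    have h0 := hg 0; have h1 := hg 1; have h2 := hg 2
    simp [Fin.sum_univ_one, Fin.sum_univ_two, Fin.sum_univ_three, Matrix.cons_val_succ, Matrix.vecHead, Matrix.vecTail] at h0 h1 h2
    fin_cases j
    · exact h0

lemma li9 {K W : Type} [Field K] [AddCommGroup W] [Module K W]
    {u : Fin 5 → W} (hu : LinearIndependent K u) :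
    LinearIndependent K ![u 1 + u 2] := by
  apply li_convert hu ![![0,1,1,0,0]]
  · intro j; fin_cases j <;> simp [Fin.sum_univ_five]
  · intro g hg j
    have h0 := hg 0; have h1 := hg 1; have h2 := hg 2
    simp [Fin.sum_univ_one, Fin.sum_univ_two, Fin.sum_univ_three, Matrix.cons_val_succ, Matrix.vecHead, Matrix.vecTail] at h0 h1 h2
    fin_cases j
    · exact h1

lemma li01 {K W : Type} [Field K] [AddCommGroup W] [Module K W]
    {u : Fin 5 → W} (hu : LinearIndependent K u) :
    LinearIndependent K ![u 0, u 1] := by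
  apply li_convert hu ![![1,0,0,0,0],![0,1,0,0,0]]
  · intro j; fin_cases j <;> simp [Fin.sum_univ_five]
  · intro g hg j
    have h0 := hg 0; have h1 := hg 1; have h2 := hg 2
    simp [Fin.sum_univ_one, Fin.sum_univ_two, Fin.sum_univ_three, Matrix.cons_val_succ, Matrix.vecHead, Matrix.vecTail] at h0 h1 h2
    fin_cases j
    · exact h0
    · exact h1

lemma li02 {K W : Type} [Field K] [AddCommGroup W] [Module K W]
    {u : Fin 5 → W} (hu : LinearIndependent K u) :
    LinearIndependent K ![u 0, u 2] := by
  apply li_convert hu ![![1,0,0,0,0],![0,0,1,0,0]]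
  · intro j; fin_cases j <;> simp [Fin.sum_univ_five]
  · intro g hg j
    have h0 := hg 0; have h1 := hg 1; have h2 := hg 2
    simp [Fin.sum_univ_one, Fin.sum_univ_two, Fin.sum_univ_three, Matrix.cons_val_succ, Matrix.vecHead, Matrix.vecTail] at h0 h1 h2
    fin_cases j
    · exact h0
    · exact h2

lemma li12 {K W : Type} [Field K] [AddCommGroup W] [Module K W]
    {u : Fin 5 → W} (hu : LinearIndependent K u) :
    LinearIndependent K ![u 1, u 2] := by
  apply li_convert hu ![![0,1,0,0,0],![0,0,1,0,0]]
  · intro j; fin_cases j <;> simp [Fin.sum_univ_five]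
  · intro g hg j
    have h0 := hg 0; have h1 := hg 1; have h2 := hg 2
    simp [Fin.sum_univ_one, Fin.sum_univ_two, Fin.sum_univ_three, Matrix.cons_val_succ, Matrix.vecHead, Matrix.vecTail] at h0 h1 h2
    fin_cases j
    · exact h1
    · exact h2

lemma li012 {K W : Type} [Field K] [AddCommGroup W] [Module K W]
    {u : Fin 5 → W} (hu : LinearIndependent K u) :
    LinearIndependent K ![u 0, u 1, u 2] := by
  apply li_convert hu ![![1,0,0,0,0],![0,1,0,0,0],![0,0,1,0,0]]
  · intro j; fin_cases j <;> simp [Fin.sum_univ_five]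
  · intro g hg j
    have h0 := hg 0; have h1 := hg 1; have h2 := hg 2
    simp [Fin.sum_univ_one, Fin.sum_univ_two, Fin.sum_univ_three, Matrix.cons_val_succ, Matrix.vecHead, Matrix.vecTail] at h0 h1 h2
    fin_cases j
    · exact h0
    · exact h1
    · exact h2

lemma li72 {K W : Type} [Field K] [AddCommGroup W] [Module K W]
    {u : Fin 5 → W} (hu : LinearIndependent K u) :
    LinearIndependent K ![u 0 + u 1, u 2] := by
  apply li_convert hu ![![1,1,0,0,0],![0,0,1,0,0]]
  · intro j; fin_cases j <;> simp [Fin.sum_univ_five]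
  · intro g hg j
    have h0 := hg 0; have h1 := hg 1; have h2 := hg 2
    simp [Fin.sum_univ_one, Fin.sum_univ_two, Fin.sum_univ_three, Matrix.cons_val_succ, Matrix.vecHead, Matrix.vecTail] at h0 h1 h2
    fin_cases j
    · exact h0
    · exact h2

lemma li81 {K W : Type} [Field K] [AddCommGroup W] [Module K W]
    {u : Fin 5 → W} (hu : LinearIndependent K u) :
    LinearIndependent K ![u 0 + u 2, u 1] := by
  apply li_convert hu ![![1,0,1,0,0],![0,1,0,0,0]]
  · intro j; fin_cases j <;> simp [Fin.sum_univ_five]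
  · intro g hg j
    have h0 := hg 0; have h1 := hg 1; have h2 := hg 2
    simp [Fin.sum_univ_one, Fin.sum_univ_two, Fin.sum_univ_three, Matrix.cons_val_succ, Matrix.vecHead, Matrix.vecTail] at h0 h1 h2
    fin_cases j
    · exact h0
    · exact h1

lemma li90 {K W : Type} [Field K] [AddCommGroup W] [Module K W]
    {u : Fin 5 → W} (hu : LinearIndependent K u) :
    LinearIndependent K ![u 1 + u 2, u 0] := by
  apply li_convert hu ![![0,1,1,0,0],![1,0,0,0,0]]
  · intro j; fin_cases j <;> simp [Fin.sum_univ_five]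
  · intro g hg j
    have h0 := hg 0; have h1 := hg 1; have h2 := hg 2
    simp [Fin.sum_univ_one, Fin.sum_univ_two, Fin.sum_univ_three, Matrix.cons_val_succ, Matrix.vecHead, Matrix.vecTail] at h0 h1 h2
    fin_cases j
    · exact h1
    · exact h0

lemma li50 {K W : Type} [Field K] [AddCommGroup W] [Module K W]
    {u : Fin 5 → W} (hu : LinearIndependent K u) :
    LinearIndependent K ![u 0 + u 1 + u 2, u 0] := by
  apply li_convert hu ![![1,1,1,0,0],![1,0,0,0,0]]
  · intro j; fin_cases j <;> simp [Fin.sum_univ_five]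
  · intro g hg j
    have h0 := hg 0; have h1 := hg 1; have h2 := hg 2
    simp [Fin.sum_univ_one, Fin.sum_univ_two, Fin.sum_univ_three, Matrix.cons_val_succ, Matrix.vecHead, Matrix.vecTail] at h0 h1 h2
    fin_cases j
    · exact h1
    · exact (by linear_combination h0 - h1 : g 1 = 0)

lemma li78 {K W : Type} [Field K] [AddCommGroup W] [Module K W]
    {u : Fin 5 → W} (hu : LinearIndependent K u) :
    LinearIndependent K ![u 0 + u 1, u 0 + u 2] := by
  apply li_convert hu ![![1,1,0,0,0],![1,0,1,0,0]]
  · intro j; fin_cases j <;> simp [Fin.sum_univ_five]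
  · intro g hg j
    have h0 := hg 0; have h1 := hg 1; have h2 := hg 2
    simp [Fin.sum_univ_one, Fin.sum_univ_two, Fin.sum_univ_three, Matrix.cons_val_succ, Matrix.vecHead, Matrix.vecTail] at h0 h1 h2
    fin_cases j
    · exact h1
    · exact h2

lemma li789 {K W : Type} [Field K] [AddCommGroup W] [Module K W]
    {u : Fin 5 → W} (hu : LinearIndependent K u) (htwo : (2:K) ≠ 0) :
    LinearIndependent K ![u 0 + u 1, u 0 + u 2, u 1 + u 2] := by
  apply li_convert hu ![![1,1,0,0,0],![1,0,1,0,0],![0,1,1,0,0]]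
  · intro j; fin_cases j <;> simp [Fin.sum_univ_five]
  · intro g hg j
    have h0 := hg 0; have h1 := hg 1; have h2 := hg 2
    simp [Fin.sum_univ_one, Fin.sum_univ_two, Fin.sum_univ_three, Matrix.cons_val_succ, Matrix.vecHead, Matrix.vecTail] at h0 h1 h2
    have hg0 : g 0 = 0 := by
      have h2g : (2:K) * g 0 = 0 := by linear_combination h0 + h1 - h2
      exact (mul_eq_zero.mp h2g).resolve_left htwo
    have hg1 : g 1 = 0 := by linear_combination h0 - hg0
    have hg2 : g 2 = 0 := by linear_combination h1 - hg0
    fin_cases j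
    · exact hg0
    · exact hg1
    · exact hg2

lemma rk0 {K W : Type} [Field K] [AddCommGroup W] [Module K W] [FiniteDimensional K W]
    (u : Fin 5 → W) (hu : LinearIndependent K u) (htwo : (2:K) ≠ 0)
    (S : Fin 13 → Submodule K W)
    (hS : S = ![Submodule.span K {u 0}, Submodule.span K {u 1}, Submodule.span K {u 2},
        Submodule.span K {u 3}, Submodule.span K {u 4},
        Submodule.span K {u 0 + u 1 + u 2}, Submodule.span K {u 2 + u 3 + u 4},
        Submodule.span K {u 0 + u 1}, Submodule.span K {u 0 + u 2},
        Submodule.span K {u 1 + u 2}, Submodule.span K {u 2 + u 3},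
        Submodule.span K {u 2 + u 4}, Submodule.span K {u 3 + u 4}]) :
    Module.finrank K ↥(({0} : Finset (Fin 13)).sup S) = 1 := by
  have hsup : ({0} : Finset (Fin 13)).sup S = Submodule.span K {u 0} := by
    subst hS; simp [Finset.sup_insert, Finset.sup_singleton]; try rfl
  rw [hsup]
  apply rank_helper _ ![u 0] (li0 hu)
  · intro j; fin_cases j
    · exact (Submodule.mem_span_singleton_self _)
  · rw [Submodule.span_singleton_le_iff_mem]
    · exact Submodule.subset_span ⟨0, rfl⟩

lemma rk5 {K W : Type} [Field K] [AddCommGroup W] [Module K W] [FiniteDimensional K W]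
    (u : Fin 5 → W) (hu : LinearIndependent K u) (htwo : (2:K) ≠ 0)
    (S : Fin 13 → Submodule K W)
    (hS : S = ![Submodule.span K {u 0}, Submodule.span K {u 1}, Submodule.span K {u 2},
        Submodule.span K {u 3}, Submodule.span K {u 4},
        Submodule.span K {u 0 + u 1 + u 2}, Submodule.span K {u 2 + u 3 + u 4},
        Submodule.span K {u 0 + u 1}, Submodule.span K {u 0 + u 2},
        Submodule.span K {u 1 + u 2}, Submodule.span K {u 2 + u 3},
        Submodule.span K {u 2 + u 4}, Submodule.span K {u 3 + u 4}]) :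
    Module.finrank K ↥(({5} : Finset (Fin 13)).sup S) = 1 := by
  have hsup : ({5} : Finset (Fin 13)).sup S = Submodule.span K {u 0 + u 1 + u 2} := by
    subst hS; simp [Finset.sup_insert, Finset.sup_singleton]; try rfl
  rw [hsup]
  apply rank_helper _ ![u 0 + u 1 + u 2] (li5 hu)
  · intro j; fin_cases j
    · exact (Submodule.mem_span_singleton_self _)
  · rw [Submodule.span_singleton_le_iff_mem]
    · exact Submodule.subset_span ⟨0, rfl⟩

lemma rk7 {K W : Type} [Field K] [AddCommGroup W] [Module K W] [FiniteDimensional K W]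
    (u : Fin 5 → W) (hu : LinearIndependent K u) (htwo : (2:K) ≠ 0)
    (S : Fin 13 → Submodule K W)
    (hS : S = ![Submodule.span K {u 0}, Submodule.span K {u 1}, Submodule.span K {u 2},
        Submodule.span K {u 3}, Submodule.span K {u 4},
        Submodule.span K {u 0 + u 1 + u 2}, Submodule.span K {u 2 + u 3 + u 4},
        Submodule.span K {u 0 + u 1}, Submodule.span K {u 0 + u 2},
        Submodule.span K {u 1 + u 2}, Submodule.span K {u 2 + u 3},
        Submodule.span K {u 2 + u 4}, Submodule.span K {u 3 + u 4}]) :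
    Module.finrank K ↥(({7} : Finset (Fin 13)).sup S) = 1 := by
  have hsup : ({7} : Finset (Fin 13)).sup S = Submodule.span K {u 0 + u 1} := by
    subst hS; simp [Finset.sup_insert, Finset.sup_singleton]; try rfl
  rw [hsup]
  apply rank_helper _ ![u 0 + u 1] (li7 hu)
  · intro j; fin_cases j
    · exact (Submodule.mem_span_singleton_self _)
  · rw [Submodule.span_singleton_le_iff_mem]
    · exact Submodule.subset_span ⟨0, rfl⟩

lemma rk8 {K W : Type} [Field K] [AddCommGroup W] [Module K W] [FiniteDimensional K W]
    (u : Fin 5 → W) (hu : LinearIndependent K u) (htwo : (2:K) ≠ 0)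
    (S : Fin 13 → Submodule K W)
    (hS : S = ![Submodule.span K {u 0}, Submodule.span K {u 1}, Submodule.span K {u 2},
        Submodule.span K {u 3}, Submodule.span K {u 4},
        Submodule.span K {u 0 + u 1 + u 2}, Submodule.span K {u 2 + u 3 + u 4},
        Submodule.span K {u 0 + u 1}, Submodule.span K {u 0 + u 2},
        Submodule.span K {u 1 + u 2}, Submodule.span K {u 2 + u 3},
        Submodule.span K {u 2 + u 4}, Submodule.span K {u 3 + u 4}]) :
    Module.finrank K ↥(({8} : Finset (Fin 13)).sup S) = 1 := by
  have hsup : ({8} : Finset (Fin 13)).sup S = Submodule.span K {u 0 + u 2} := by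
    subst hS; simp [Finset.sup_insert, Finset.sup_singleton]; try rfl
  rw [hsup]
  apply rank_helper _ ![u 0 + u 2] (li8 hu)
  · intro j; fin_cases j
    · exact (Submodule.mem_span_singleton_self _)
  · rw [Submodule.span_singleton_le_iff_mem]
    · exact Submodule.subset_span ⟨0, rfl⟩

lemma rk9 {K W : Type} [Field K] [AddCommGroup W] [Module K W] [FiniteDimensional K W]
    (u : Fin 5 → W) (hu : LinearIndependent K u) (htwo : (2:K) ≠ 0)
    (S : Fin 13 → Submodule K W)
    (hS : S = ![Submodule.span K {u 0}, Submodule.span K {u 1}, Submodule.span K {u 2},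
        Submodule.span K {u 3}, Submodule.span K {u 4},
        Submodule.span K {u 0 + u 1 + u 2}, Submodule.span K {u 2 + u 3 + u 4},
        Submodule.span K {u 0 + u 1}, Submodule.span K {u 0 + u 2},
        Submodule.span K {u 1 + u 2}, Submodule.span K {u 2 + u 3},
        Submodule.span K {u 2 + u 4}, Submodule.span K {u 3 + u 4}]) :
    Module.finrank K ↥(({9} : Finset (Fin 13)).sup S) = 1 := by
  have hsup : ({9} : Finset (Fin 13)).sup S = Submodule.span K {u 1 + u 2} := by
    subst hS; simp [Finset.sup_insert, Finset.sup_singleton]; try rfl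
  rw [hsup]
  apply rank_helper _ ![u 1 + u 2] (li9 hu)
  · intro j; fin_cases j
    · exact (Submodule.mem_span_singleton_self _)
  · rw [Submodule.span_singleton_le_iff_mem]
    · exact Submodule.subset_span ⟨0, rfl⟩

lemma rk01 {K W : Type} [Field K] [AddCommGroup W] [Module K W] [FiniteDimensional K W]
    (u : Fin 5 → W) (hu : LinearIndependent K u) (htwo : (2:K) ≠ 0)
    (S : Fin 13 → Submodule K W)
    (hS : S = ![Submodule.span K {u 0}, Submodule.span K {u 1}, Submodule.span K {u 2},
        Submodule.span K {u 3}, Submodule.span K {u 4},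
        Submodule.span K {u 0 + u 1 + u 2}, Submodule.span K {u 2 + u 3 + u 4},
        Submodule.span K {u 0 + u 1}, Submodule.span K {u 0 + u 2},
        Submodule.span K {u 1 + u 2}, Submodule.span K {u 2 + u 3},
        Submodule.span K {u 2 + u 4}, Submodule.span K {u 3 + u 4}]) :
    Module.finrank K ↥(({0,1} : Finset (Fin 13)).sup S) = 2 := by
  have hsup : ({0,1} : Finset (Fin 13)).sup S = Submodule.span K {u 0} ⊔ Submodule.span K {u 1} := by
    subst hS; simp [Finset.sup_insert, Finset.sup_singleton]; try rfl
  rw [hsup]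
  apply rank_helper _ ![u 0, u 1] (li01 hu)
  · intro j; fin_cases j
    · exact Submodule.mem_sup_left (Submodule.mem_span_singleton_self _)
    · exact Submodule.mem_sup_right (Submodule.mem_span_singleton_self _)
  · refine sup_le ?_ ?_ <;> rw [Submodule.span_singleton_le_iff_mem]
    · exact Submodule.subset_span ⟨0, rfl⟩
    · exact Submodule.subset_span ⟨1, rfl⟩

lemma rk02 {K W : Type} [Field K] [AddCommGroup W] [Module K W] [FiniteDimensional K W]
    (u : Fin 5 → W) (hu : LinearIndependent K u) (htwo : (2:K) ≠ 0)
    (S : Fin 13 → Submodule K W)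
    (hS : S = ![Submodule.span K {u 0}, Submodule.span K {u 1}, Submodule.span K {u 2},
        Submodule.span K {u 3}, Submodule.span K {u 4},
        Submodule.span K {u 0 + u 1 + u 2}, Submodule.span K {u 2 + u 3 + u 4},
        Submodule.span K {u 0 + u 1}, Submodule.span K {u 0 + u 2},
        Submodule.span K {u 1 + u 2}, Submodule.span K {u 2 + u 3},
        Submodule.span K {u 2 + u 4}, Submodule.span K {u 3 + u 4}]) :
    Module.finrank K ↥(({0,2} : Finset (Fin 13)).sup S) = 2 := by
  have hsup : ({0,2} : Finset (Fin 13)).sup S = Submodule.span K {u 0} ⊔ Submodule.span K {u 2} := by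
    subst hS; simp [Finset.sup_insert, Finset.sup_singleton]; try rfl
  rw [hsup]
  apply rank_helper _ ![u 0, u 2] (li02 hu)
  · intro j; fin_cases j
    · exact Submodule.mem_sup_left (Submodule.mem_span_singleton_self _)
    · exact Submodule.mem_sup_right (Submodule.mem_span_singleton_self _)
  · refine sup_le ?_ ?_ <;> rw [Submodule.span_singleton_le_iff_mem]
    · exact Submodule.subset_span ⟨0, rfl⟩
    · exact Submodule.subset_span ⟨1, rfl⟩

lemma rk12 {K W : Type} [Field K] [AddCommGroup W] [Module K W] [FiniteDimensional K W]
    (u : Fin 5 → W) (hu : LinearIndependent K u) (htwo : (2:K) ≠ 0)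
    (S : Fin 13 → Submodule K W)
    (hS : S = ![Submodule.span K {u 0}, Submodule.span K {u 1}, Submodule.span K {u 2},
        Submodule.span K {u 3}, Submodule.span K {u 4},
        Submodule.span K {u 0 + u 1 + u 2}, Submodule.span K {u 2 + u 3 + u 4},
        Submodule.span K {u 0 + u 1}, Submodule.span K {u 0 + u 2},
        Submodule.span K {u 1 + u 2}, Submodule.span K {u 2 + u 3},
        Submodule.span K {u 2 + u 4}, Submodule.span K {u 3 + u 4}]) :
    Module.finrank K ↥(({1,2} : Finset (Fin 13)).sup S) = 2 := by
  have hsup : ({1,2} : Finset (Fin 13)).sup S = Submodule.span K {u 1} ⊔ Submodule.span K {u 2} := by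
    subst hS; simp [Finset.sup_insert, Finset.sup_singleton]; try rfl
  rw [hsup]
  apply rank_helper _ ![u 1, u 2] (li12 hu)
  · intro j; fin_cases j
    · exact Submodule.mem_sup_left (Submodule.mem_span_singleton_self _)
    · exact Submodule.mem_sup_right (Submodule.mem_span_singleton_self _)
  · refine sup_le ?_ ?_ <;> rw [Submodule.span_singleton_le_iff_mem]
    · exact Submodule.subset_span ⟨0, rfl⟩
    · exact Submodule.subset_span ⟨1, rfl⟩

lemma rk012 {K W : Type} [Field K] [AddCommGroup W] [Module K W] [FiniteDimensional K W]
    (u : Fin 5 → W) (hu : LinearIndependent K u) (htwo : (2:K) ≠ 0)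
    (S : Fin 13 → Submodule K W)
    (hS : S = ![Submodule.span K {u 0}, Submodule.span K {u 1}, Submodule.span K {u 2},
        Submodule.span K {u 3}, Submodule.span K {u 4},
        Submodule.span K {u 0 + u 1 + u 2}, Submodule.span K {u 2 + u 3 + u 4},
        Submodule.span K {u 0 + u 1}, Submodule.span K {u 0 + u 2},
        Submodule.span K {u 1 + u 2}, Submodule.span K {u 2 + u 3},
        Submodule.span K {u 2 + u 4}, Submodule.span K {u 3 + u 4}]) :
    Module.finrank K ↥(({0,1,2} : Finset (Fin 13)).sup S) = 3 := by
  have hsup : ({0,1,2} : Finset (Fin 13)).sup S = Submodule.span K {u 0} ⊔ (Submodule.span K {u 1} ⊔ Submodule.span K {u 2}) := by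
    subst hS; simp [Finset.sup_insert, Finset.sup_singleton]; try rfl
  rw [hsup]
  apply rank_helper _ ![u 0, u 1, u 2] (li012 hu)
  · intro j; fin_cases j
    · exact Submodule.mem_sup_left (Submodule.mem_span_singleton_self _)
    · exact Submodule.mem_sup_right (Submodule.mem_sup_left (Submodule.mem_span_singleton_self _))
    · exact Submodule.mem_sup_right (Submodule.mem_sup_right (Submodule.mem_span_singleton_self _))
  · refine sup_le ?_ (sup_le ?_ ?_) <;> rw [Submodule.span_singleton_le_iff_mem]
    · exact Submodule.subset_span ⟨0, rfl⟩
    · exact Submodule.subset_span ⟨1, rfl⟩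
    · exact Submodule.subset_span ⟨2, rfl⟩

lemma rk701 {K W : Type} [Field K] [AddCommGroup W] [Module K W] [FiniteDimensional K W]
    (u : Fin 5 → W) (hu : LinearIndependent K u) (htwo : (2:K) ≠ 0)
    (S : Fin 13 → Submodule K W)
    (hS : S = ![Submodule.span K {u 0}, Submodule.span K {u 1}, Submodule.span K {u 2},
        Submodule.span K {u 3}, Submodule.span K {u 4},
        Submodule.span K {u 0 + u 1 + u 2}, Submodule.span K {u 2 + u 3 + u 4},
        Submodule.span K {u 0 + u 1}, Submodule.span K {u 0 + u 2},
        Submodule.span K {u 1 + u 2}, Submodule.span K {u 2 + u 3},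
        Submodule.span K {u 2 + u 4}, Submodule.span K {u 3 + u 4}]) :
    Module.finrank K ↥(({7,0,1} : Finset (Fin 13)).sup S) = 2 := by
  have hsup : ({7,0,1} : Finset (Fin 13)).sup S = Submodule.span K {u 0 + u 1} ⊔ (Submodule.span K {u 0} ⊔ Submodule.span K {u 1}) := by
    subst hS; simp [Finset.sup_insert, Finset.sup_singleton]; try rfl
  rw [hsup]
  apply rank_helper _ ![u 0, u 1] (li01 hu)
  · intro j; fin_cases j
    · exact Submodule.mem_sup_right (Submodule.mem_sup_left (Submodule.mem_span_singleton_self _))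
    · exact Submodule.mem_sup_right (Submodule.mem_sup_right (Submodule.mem_span_singleton_self _))
  · refine sup_le ?_ (sup_le ?_ ?_) <;> rw [Submodule.span_singleton_le_iff_mem]
    · exact add_mem (Submodule.subset_span ⟨0, rfl⟩) (Submodule.subset_span ⟨1, rfl⟩)
    · exact Submodule.subset_span ⟨0, rfl⟩
    · exact Submodule.subset_span ⟨1, rfl⟩

lemma rk802 {K W : Type} [Field K] [AddCommGroup W] [Module K W] [FiniteDimensional K W]
    (u : Fin 5 → W) (hu : LinearIndependent K u) (htwo : (2:K) ≠ 0)
    (S : Fin 13 → Submodule K W)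
    (hS : S = ![Submodule.span K {u 0}, Submodule.span K {u 1}, Submodule.span K {u 2},
        Submodule.span K {u 3}, Submodule.span K {u 4},
        Submodule.span K {u 0 + u 1 + u 2}, Submodule.span K {u 2 + u 3 + u 4},
        Submodule.span K {u 0 + u 1}, Submodule.span K {u 0 + u 2},
        Submodule.span K {u 1 + u 2}, Submodule.span K {u 2 + u 3},
        Submodule.span K {u 2 + u 4}, Submodule.span K {u 3 + u 4}]) :
    Module.finrank K ↥(({8,0,2} : Finset (Fin 13)).sup S) = 2 := by
  have hsup : ({8,0,2} : Finset (Fin 13)).sup S = Submodule.span K {u 0 + u 2} ⊔ (Submodule.span K {u 0} ⊔ Submodule.span K {u 2}) := by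
    subst hS; simp [Finset.sup_insert, Finset.sup_singleton]; try rfl
  rw [hsup]
  apply rank_helper _ ![u 0, u 2] (li02 hu)
  · intro j; fin_cases j
    · exact Submodule.mem_sup_right (Submodule.mem_sup_left (Submodule.mem_span_singleton_self _))
    · exact Submodule.mem_sup_right (Submodule.mem_sup_right (Submodule.mem_span_singleton_self _))
  · refine sup_le ?_ (sup_le ?_ ?_) <;> rw [Submodule.span_singleton_le_iff_mem]
    · exact add_mem (Submodule.subset_span ⟨0, rfl⟩) (Submodule.subset_span ⟨1, rfl⟩)
    · exact Submodule.subset_span ⟨0, rfl⟩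
    · exact Submodule.subset_span ⟨1, rfl⟩

lemma rk912 {K W : Type} [Field K] [AddCommGroup W] [Module K W] [FiniteDimensional K W]
    (u : Fin 5 → W) (hu : LinearIndependent K u) (htwo : (2:K) ≠ 0)
    (S : Fin 13 → Submodule K W)
    (hS : S = ![Submodule.span K {u 0}, Submodule.span K {u 1}, Submodule.span K {u 2},
        Submodule.span K {u 3}, Submodule.span K {u 4},
        Submodule.span K {u 0 + u 1 + u 2}, Submodule.span K {u 2 + u 3 + u 4},
        Submodule.span K {u 0 + u 1}, Submodule.span K {u 0 + u 2},
        Submodule.span K {u 1 + u 2}, Submodule.span K {u 2 + u 3},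
        Submodule.span K {u 2 + u 4}, Submodule.span K {u 3 + u 4}]) :
    Module.finrank K ↥(({9,1,2} : Finset (Fin 13)).sup S) = 2 := by
  have hsup : ({9,1,2} : Finset (Fin 13)).sup S = Submodule.span K {u 1 + u 2} ⊔ (Submodule.span K {u 1} ⊔ Submodule.span K {u 2}) := by
    subst hS; simp [Finset.sup_insert, Finset.sup_singleton]; try rfl
  rw [hsup]
  apply rank_helper _ ![u 1, u 2] (li12 hu)
  · intro j; fin_cases j
    · exact Submodule.mem_sup_right (Submodule.mem_sup_left (Submodule.mem_span_singleton_self _))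
    · exact Submodule.mem_sup_right (Submodule.mem_sup_right (Submodule.mem_span_singleton_self _))
  · refine sup_le ?_ (sup_le ?_ ?_) <;> rw [Submodule.span_singleton_le_iff_mem]
    · exact add_mem (Submodule.subset_span ⟨0, rfl⟩) (Submodule.subset_span ⟨1, rfl⟩)
    · exact Submodule.subset_span ⟨0, rfl⟩
    · exact Submodule.subset_span ⟨1, rfl⟩

lemma rk72 {K W : Type} [Field K] [AddCommGroup W] [Module K W] [FiniteDimensional K W]
    (u : Fin 5 → W) (hu : LinearIndependent K u) (htwo : (2:K) ≠ 0)
    (S : Fin 13 → Submodule K W)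
    (hS : S = ![Submodule.span K {u 0}, Submodule.span K {u 1}, Submodule.span K {u 2},
        Submodule.span K {u 3}, Submodule.span K {u 4},
        Submodule.span K {u 0 + u 1 + u 2}, Submodule.span K {u 2 + u 3 + u 4},
        Submodule.span K {u 0 + u 1}, Submodule.span K {u 0 + u 2},
        Submodule.span K {u 1 + u 2}, Submodule.span K {u 2 + u 3},
        Submodule.span K {u 2 + u 4}, Submodule.span K {u 3 + u 4}]) :
    Module.finrank K ↥(({7,2} : Finset (Fin 13)).sup S) = 2 := by
  have hsup : ({7,2} : Finset (Fin 13)).sup S = Submodule.span K {u 0 + u 1} ⊔ Submodule.span K {u 2} := by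
    subst hS; simp [Finset.sup_insert, Finset.sup_singleton]; try rfl
  rw [hsup]
  apply rank_helper _ ![u 0 + u 1, u 2] (li72 hu)
  · intro j; fin_cases j
    · exact Submodule.mem_sup_left (Submodule.mem_span_singleton_self _)
    · exact Submodule.mem_sup_right (Submodule.mem_span_singleton_self _)
  · refine sup_le ?_ ?_ <;> rw [Submodule.span_singleton_le_iff_mem]
    · exact Submodule.subset_span ⟨0, rfl⟩
    · exact Submodule.subset_span ⟨1, rfl⟩

lemma rk81 {K W : Type} [Field K] [AddCommGroup W] [Module K W] [FiniteDimensional K W]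
    (u : Fin 5 → W) (hu : LinearIndependent K u) (htwo : (2:K) ≠ 0)
    (S : Fin 13 → Submodule K W)
    (hS : S = ![Submodule.span K {u 0}, Submodule.span K {u 1}, Submodule.span K {u 2},
        Submodule.span K {u 3}, Submodule.span K {u 4},
        Submodule.span K {u 0 + u 1 + u 2}, Submodule.span K {u 2 + u 3 + u 4},
        Submodule.span K {u 0 + u 1}, Submodule.span K {u 0 + u 2},
        Submodule.span K {u 1 + u 2}, Submodule.span K {u 2 + u 3},
        Submodule.span K {u 2 + u 4}, Submodule.span K {u 3 + u 4}]) :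
    Module.finrank K ↥(({8,1} : Finset (Fin 13)).sup S) = 2 := by
  have hsup : ({8,1} : Finset (Fin 13)).sup S = Submodule.span K {u 0 + u 2} ⊔ Submodule.span K {u 1} := by
    subst hS; simp [Finset.sup_insert, Finset.sup_singleton]; try rfl
  rw [hsup]
  apply rank_helper _ ![u 0 + u 2, u 1] (li81 hu)
  · intro j; fin_cases j
    · exact Submodule.mem_sup_left (Submodule.mem_span_singleton_self _)
    · exact Submodule.mem_sup_right (Submodule.mem_span_singleton_self _)
  · refine sup_le ?_ ?_ <;> rw [Submodule.span_singleton_le_iff_mem]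
    · exact Submodule.subset_span ⟨0, rfl⟩
    · exact Submodule.subset_span ⟨1, rfl⟩

lemma rk90 {K W : Type} [Field K] [AddCommGroup W] [Module K W] [FiniteDimensional K W]
    (u : Fin 5 → W) (hu : LinearIndependent K u) (htwo : (2:K) ≠ 0)
    (S : Fin 13 → Submodule K W)
    (hS : S = ![Submodule.span K {u 0}, Submodule.span K {u 1}, Submodule.span K {u 2},
        Submodule.span K {u 3}, Submodule.span K {u 4},
        Submodule.span K {u 0 + u 1 + u 2}, Submodule.span K {u 2 + u 3 + u 4},
        Submodule.span K {u 0 + u 1}, Submodule.span K {u 0 + u 2},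
        Submodule.span K {u 1 + u 2}, Submodule.span K {u 2 + u 3},
        Submodule.span K {u 2 + u 4}, Submodule.span K {u 3 + u 4}]) :
    Module.finrank K ↥(({9,0} : Finset (Fin 13)).sup S) = 2 := by
  have hsup : ({9,0} : Finset (Fin 13)).sup S = Submodule.span K {u 1 + u 2} ⊔ Submodule.span K {u 0} := by
    subst hS; simp [Finset.sup_insert, Finset.sup_singleton]; try rfl
  rw [hsup]
  apply rank_helper _ ![u 1 + u 2, u 0] (li90 hu)
  · intro j; fin_cases j
    · exact Submodule.mem_sup_left (Submodule.mem_span_singleton_self _)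
    · exact Submodule.mem_sup_right (Submodule.mem_span_singleton_self _)
  · refine sup_le ?_ ?_ <;> rw [Submodule.span_singleton_le_iff_mem]
    · exact Submodule.subset_span ⟨0, rfl⟩
    · exact Submodule.subset_span ⟨1, rfl⟩

lemma rk572 {K W : Type} [Field K] [AddCommGroup W] [Module K W] [FiniteDimensional K W]
    (u : Fin 5 → W) (hu : LinearIndependent K u) (htwo : (2:K) ≠ 0)
    (S : Fin 13 → Submodule K W)
    (hS : S = ![Submodule.span K {u 0}, Submodule.span K {u 1}, Submodule.span K {u 2},
        Submodule.span K {u 3}, Submodule.span K {u 4},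
        Submodule.span K {u 0 + u 1 + u 2}, Submodule.span K {u 2 + u 3 + u 4},
        Submodule.span K {u 0 + u 1}, Submodule.span K {u 0 + u 2},
        Submodule.span K {u 1 + u 2}, Submodule.span K {u 2 + u 3},
        Submodule.span K {u 2 + u 4}, Submodule.span K {u 3 + u 4}]) :
    Module.finrank K ↥(({5,7,2} : Finset (Fin 13)).sup S) = 2 := by
  have hsup : ({5,7,2} : Finset (Fin 13)).sup S = Submodule.span K {u 0 + u 1 + u 2} ⊔ (Submodule.span K {u 0 + u 1} ⊔ Submodule.span K {u 2}) := by
    subst hS; simp [Finset.sup_insert, Finset.sup_singleton]; try rfl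
  rw [hsup]
  apply rank_helper _ ![u 0 + u 1, u 2] (li72 hu)
  · intro j; fin_cases j
    · exact Submodule.mem_sup_right (Submodule.mem_sup_left (Submodule.mem_span_singleton_self _))
    · exact Submodule.mem_sup_right (Submodule.mem_sup_right (Submodule.mem_span_singleton_self _))
  · refine sup_le ?_ (sup_le ?_ ?_) <;> rw [Submodule.span_singleton_le_iff_mem]
    · exact add_mem (Submodule.subset_span ⟨0, rfl⟩) (Submodule.subset_span ⟨1, rfl⟩)
    · exact Submodule.subset_span ⟨0, rfl⟩
    · exact Submodule.subset_span ⟨1, rfl⟩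

lemma rk581 {K W : Type} [Field K] [AddCommGroup W] [Module K W] [FiniteDimensional K W]
    (u : Fin 5 → W) (hu : LinearIndependent K u) (htwo : (2:K) ≠ 0)
    (S : Fin 13 → Submodule K W)
    (hS : S = ![Submodule.span K {u 0}, Submodule.span K {u 1}, Submodule.span K {u 2},
        Submodule.span K {u 3}, Submodule.span K {u 4},
        Submodule.span K {u 0 + u 1 + u 2}, Submodule.span K {u 2 + u 3 + u 4},
        Submodule.span K {u 0 + u 1}, Submodule.span K {u 0 + u 2},
        Submodule.span K {u 1 + u 2}, Submodule.span K {u 2 + u 3},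
        Submodule.span K {u 2 + u 4}, Submodule.span K {u 3 + u 4}]) :
    Module.finrank K ↥(({5,8,1} : Finset (Fin 13)).sup S) = 2 := by
  have hsup : ({5,8,1} : Finset (Fin 13)).sup S = Submodule.span K {u 0 + u 1 + u 2} ⊔ (Submodule.span K {u 0 + u 2} ⊔ Submodule.span K {u 1}) := by
    subst hS; simp [Finset.sup_insert, Finset.sup_singleton]; try rfl
  rw [hsup]
  apply rank_helper _ ![u 0 + u 2, u 1] (li81 hu)
  · intro j; fin_cases j
    · exact Submodule.mem_sup_right (Submodule.mem_sup_left (Submodule.mem_span_singleton_self _))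
    · exact Submodule.mem_sup_right (Submodule.mem_sup_right (Submodule.mem_span_singleton_self _))
  · refine sup_le ?_ (sup_le ?_ ?_) <;> rw [Submodule.span_singleton_le_iff_mem]
    · have habel : u 0 + u 1 + u 2 = (u 0 + u 2) + u 1 := by abel
      rw [habel]
      exact add_mem (Submodule.subset_span ⟨0, rfl⟩) (Submodule.subset_span ⟨1, rfl⟩)
    · exact Submodule.subset_span ⟨0, rfl⟩
    · exact Submodule.subset_span ⟨1, rfl⟩

lemma rk590 {K W : Type} [Field K] [AddCommGroup W] [Module K W] [FiniteDimensional K W]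
    (u : Fin 5 → W) (hu : LinearIndependent K u) (htwo : (2:K) ≠ 0)
    (S : Fin 13 → Submodule K W)
    (hS : S = ![Submodule.span K {u 0}, Submodule.span K {u 1}, Submodule.span K {u 2},
        Submodule.span K {u 3}, Submodule.span K {u 4},
        Submodule.span K {u 0 + u 1 + u 2}, Submodule.span K {u 2 + u 3 + u 4},
        Submodule.span K {u 0 + u 1}, Submodule.span K {u 0 + u 2},
        Submodule.span K {u 1 + u 2}, Submodule.span K {u 2 + u 3},
        Submodule.span K {u 2 + u 4}, Submodule.span K {u 3 + u 4}]) :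
    Module.finrank K ↥(({5,9,0} : Finset (Fin 13)).sup S) = 2 := by
  have hsup : ({5,9,0} : Finset (Fin 13)).sup S = Submodule.span K {u 0 + u 1 + u 2} ⊔ (Submodule.span K {u 1 + u 2} ⊔ Submodule.span K {u 0}) := by
    subst hS; simp [Finset.sup_insert, Finset.sup_singleton]; try rfl
  rw [hsup]
  apply rank_helper _ ![u 1 + u 2, u 0] (li90 hu)
  · intro j; fin_cases j
    · exact Submodule.mem_sup_right (Submodule.mem_sup_left (Submodule.mem_span_singleton_self _))
    · exact Submodule.mem_sup_right (Submodule.mem_sup_right (Submodule.mem_span_singleton_self _))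
  · refine sup_le ?_ (sup_le ?_ ?_) <;> rw [Submodule.span_singleton_le_iff_mem]
    · have habel : u 0 + u 1 + u 2 = (u 1 + u 2) + u 0 := by abel
      rw [habel]
      exact add_mem (Submodule.subset_span ⟨0, rfl⟩) (Submodule.subset_span ⟨1, rfl⟩)
    · exact Submodule.subset_span ⟨0, rfl⟩
    · exact Submodule.subset_span ⟨1, rfl⟩

lemma rk50 {K W : Type} [Field K] [AddCommGroup W] [Module K W] [FiniteDimensional K W]
    (u : Fin 5 → W) (hu : LinearIndependent K u) (htwo : (2:K) ≠ 0)
    (S : Fin 13 → Submodule K W)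
    (hS : S = ![Submodule.span K {u 0}, Submodule.span K {u 1}, Submodule.span K {u 2},
        Submodule.span K {u 3}, Submodule.span K {u 4},
        Submodule.span K {u 0 + u 1 + u 2}, Submodule.span K {u 2 + u 3 + u 4},
        Submodule.span K {u 0 + u 1}, Submodule.span K {u 0 + u 2},
        Submodule.span K {u 1 + u 2}, Submodule.span K {u 2 + u 3},
        Submodule.span K {u 2 + u 4}, Submodule.span K {u 3 + u 4}]) :
    Module.finrank K ↥(({5,0} : Finset (Fin 13)).sup S) = 2 := by
  have hsup : ({5,0} : Finset (Fin 13)).sup S = Submodule.span K {u 0 + u 1 + u 2} ⊔ Submodule.span K {u 0} := by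
    subst hS; simp [Finset.sup_insert, Finset.sup_singleton]; try rfl
  rw [hsup]
  apply rank_helper _ ![u 0 + u 1 + u 2, u 0] (li50 hu)
  · intro j; fin_cases j
    · exact Submodule.mem_sup_left (Submodule.mem_span_singleton_self _)
    · exact Submodule.mem_sup_right (Submodule.mem_span_singleton_self _)
  · refine sup_le ?_ ?_ <;> rw [Submodule.span_singleton_le_iff_mem]
    · exact Submodule.subset_span ⟨0, rfl⟩
    · exact Submodule.subset_span ⟨1, rfl⟩

lemma rk78 {K W : Type} [Field K] [AddCommGroup W] [Module K W] [FiniteDimensional K W]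
    (u : Fin 5 → W) (hu : LinearIndependent K u) (htwo : (2:K) ≠ 0)
    (S : Fin 13 → Submodule K W)
    (hS : S = ![Submodule.span K {u 0}, Submodule.span K {u 1}, Submodule.span K {u 2},
        Submodule.span K {u 3}, Submodule.span K {u 4},
        Submodule.span K {u 0 + u 1 + u 2}, Submodule.span K {u 2 + u 3 + u 4},
        Submodule.span K {u 0 + u 1}, Submodule.span K {u 0 + u 2},
        Submodule.span K {u 1 + u 2}, Submodule.span K {u 2 + u 3},
        Submodule.span K {u 2 + u 4}, Submodule.span K {u 3 + u 4}]) :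
    Module.finrank K ↥(({7,8} : Finset (Fin 13)).sup S) = 2 := by
  have hsup : ({7,8} : Finset (Fin 13)).sup S = Submodule.span K {u 0 + u 1} ⊔ Submodule.span K {u 0 + u 2} := by
    subst hS; simp [Finset.sup_insert, Finset.sup_singleton]; try rfl
  rw [hsup]
  apply rank_helper _ ![u 0 + u 1, u 0 + u 2] (li78 hu)
  · intro j; fin_cases j
    · exact Submodule.mem_sup_left (Submodule.mem_span_singleton_self _)
    · exact Submodule.mem_sup_right (Submodule.mem_span_singleton_self _)
  · refine sup_le ?_ ?_ <;> rw [Submodule.span_singleton_le_iff_mem]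
    · exact Submodule.subset_span ⟨0, rfl⟩
    · exact Submodule.subset_span ⟨1, rfl⟩

lemma rk789 {K W : Type} [Field K] [AddCommGroup W] [Module K W] [FiniteDimensional K W]
    (u : Fin 5 → W) (hu : LinearIndependent K u) (htwo : (2:K) ≠ 0)
    (S : Fin 13 → Submodule K W)
    (hS : S = ![Submodule.span K {u 0}, Submodule.span K {u 1}, Submodule.span K {u 2},
        Submodule.span K {u 3}, Submodule.span K {u 4},
        Submodule.span K {u 0 + u 1 + u 2}, Submodule.span K {u 2 + u 3 + u 4},
        Submodule.span K {u 0 + u 1}, Submodule.span K {u 0 + u 2},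
        Submodule.span K {u 1 + u 2}, Submodule.span K {u 2 + u 3},
        Submodule.span K {u 2 + u 4}, Submodule.span K {u 3 + u 4}]) :
    Module.finrank K ↥(({7,8,9} : Finset (Fin 13)).sup S) = 3 := by
  have hsup : ({7,8,9} : Finset (Fin 13)).sup S = Submodule.span K {u 0 + u 1} ⊔ (Submodule.span K {u 0 + u 2} ⊔ Submodule.span K {u 1 + u 2}) := by
    subst hS; simp [Finset.sup_insert, Finset.sup_singleton]; try rfl
  rw [hsup]
  apply rank_helper _ ![u 0 + u 1, u 0 + u 2, u 1 + u 2] (li789 hu htwo)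
  · intro j; fin_cases j
    · exact Submodule.mem_sup_left (Submodule.mem_span_singleton_self _)
    · exact Submodule.mem_sup_right (Submodule.mem_sup_left (Submodule.mem_span_singleton_self _))
    · exact Submodule.mem_sup_right (Submodule.mem_sup_right (Submodule.mem_span_singleton_self _))
  · refine sup_le ?_ (sup_le ?_ ?_) <;> rw [Submodule.span_singleton_le_iff_mem]
    · exact Submodule.subset_span ⟨0, rfl⟩
    · exact Submodule.subset_span ⟨1, rfl⟩
    · exact Submodule.subset_span ⟨2, rfl⟩

end AuxSecondMatroid

set_option maxHeartbeats 2000000 in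
/-- the matroid on the thirteen one-dimensional subspaces
`Z_i = ⟨u_i⟩ (i = 1,…,5)`, `V_1 = ⟨u_1+u_2+u_3⟩`, `V_2 = ⟨u_3+u_4+u_5⟩`,
`V_3 = ⟨u_1+u_2⟩`, `V_4 = ⟨u_1+u_3⟩`, `V_5 = ⟨u_2+u_3⟩`, `V_6 = ⟨u_3+u_4⟩`,
`V_7 = ⟨u_3+u_5⟩`, `V_8 = ⟨u_4+u_5⟩` for linearly independent `u_1, …, u_5` over a
finite field of odd characteristic, is odd representable but not almost even
representable. -/
theorem second_matroid_odd_not_almost_even {K W : Type} [Field K] [Fintype K]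
    (p : ℕ) (hp : p.Prime) (hodd : Odd p) [CharP K p]
    [AddCommGroup W] [Module K W] [FiniteDimensional K W]
    (u : Fin 5 → W) (hu : LinearIndependent K u)
    (S : Fin 13 → Submodule K W)
    (hS : S = ![Submodule.span K {u 0}, Submodule.span K {u 1}, Submodule.span K {u 2},
        Submodule.span K {u 3}, Submodule.span K {u 4},
        Submodule.span K {u 0 + u 1 + u 2}, Submodule.span K {u 2 + u 3 + u 4},
        Submodule.span K {u 0 + u 1}, Submodule.span K {u 0 + u 2},
        Submodule.span K {u 1 + u 2}, Submodule.span K {u 2 + u 3},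
        Submodule.span K {u 2 + u 4}, Submodule.span K {u 3 + u 4}])
    (Φ : Finset (Fin 13) → ℝ)
    (hΦ : ∀ A : Finset (Fin 13), Φ A = (Module.finrank K ↥(A.sup S) : ℝ)) :
    OddRepresentable Φ ∧ ¬ AlmostEvenRepresentable Φ := by
  constructor
  · obtain ⟨n, hpp, hcK⟩ := FiniteField.card K p
    exact ⟨{ F := K, W := W, V := S, rank_eq := hΦ }, p, (n : ℕ), hp, hodd, n.property,
      by rw [Nat.card_eq_fintype_card]; exact hcK⟩
  · rintro ⟨g, c, hEv, hcpos, hT⟩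
    have htwo : (2:K) ≠ 0 := by
      intro h
      have h2 : ((2:ℕ) : K) = 0 := by exact_mod_cast h
      have hdvd := (CharP.cast_eq_zero_iff K p 2).mp h2
      have hp2 : p = 2 := (Nat.prime_dvd_prime_iff_eq hp Nat.prime_two).mp hdvd
      rw [hp2] at hodd
      exact (by norm_num : ¬ Odd 2) hodd
    have ev0 : ∀ᶠ i in Filter.atTop, |c i * g i {0} - (1:ℝ)| < 1/100 := by
      have hval : Φ {0} = (1:ℝ) := by rw [hΦ, rk0 u hu htwo S hS]; norm_num
      have h := Metric.tendsto_nhds.mp (hT {0}) (1/100) (by norm_num)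
      simpa [Real.dist_eq, hval] using h
    have ev5 : ∀ᶠ i in Filter.atTop, |c i * g i {5} - (1:ℝ)| < 1/100 := by
      have hval : Φ {5} = (1:ℝ) := by rw [hΦ, rk5 u hu htwo S hS]; norm_num
      have h := Metric.tendsto_nhds.mp (hT {5}) (1/100) (by norm_num)
      simpa [Real.dist_eq, hval] using h
    have ev7 : ∀ᶠ i in Filter.atTop, |c i * g i {7} - (1:ℝ)| < 1/100 := by
      have hval : Φ {7} = (1:ℝ) := by rw [hΦ, rk7 u hu htwo S hS]; norm_num
      have h := Metric.tendsto_nhds.mp (hT {7}) (1/100) (by norm_num)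
      simpa [Real.dist_eq, hval] using h
    have ev8 : ∀ᶠ i in Filter.atTop, |c i * g i {8} - (1:ℝ)| < 1/100 := by
      have hval : Φ {8} = (1:ℝ) := by rw [hΦ, rk8 u hu htwo S hS]; norm_num
      have h := Metric.tendsto_nhds.mp (hT {8}) (1/100) (by norm_num)
      simpa [Real.dist_eq, hval] using h
    have ev9 : ∀ᶠ i in Filter.atTop, |c i * g i {9} - (1:ℝ)| < 1/100 := by
      have hval : Φ {9} = (1:ℝ) := by rw [hΦ, rk9 u hu htwo S hS]; norm_num
      have h := Metric.tendsto_nhds.mp (hT {9}) (1/100) (by norm_num)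
      simpa [Real.dist_eq, hval] using h
    have ev01 : ∀ᶠ i in Filter.atTop, |c i * g i {0,1} - (2:ℝ)| < 1/100 := by
      have hval : Φ {0,1} = (2:ℝ) := by rw [hΦ, rk01 u hu htwo S hS]; norm_num
      have h := Metric.tendsto_nhds.mp (hT {0,1}) (1/100) (by norm_num)
      simpa [Real.dist_eq, hval] using h
    have ev02 : ∀ᶠ i in Filter.atTop, |c i * g i {0,2} - (2:ℝ)| < 1/100 := by
      have hval : Φ {0,2} = (2:ℝ) := by rw [hΦ, rk02 u hu htwo S hS]; norm_num
      have h := Metric.tendsto_nhds.mp (hT {0,2}) (1/100) (by norm_num)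
      simpa [Real.dist_eq, hval] using h
    have ev12 : ∀ᶠ i in Filter.atTop, |c i * g i {1,2} - (2:ℝ)| < 1/100 := by
      have hval : Φ {1,2} = (2:ℝ) := by rw [hΦ, rk12 u hu htwo S hS]; norm_num
      have h := Metric.tendsto_nhds.mp (hT {1,2}) (1/100) (by norm_num)
      simpa [Real.dist_eq, hval] using h
    have ev012 : ∀ᶠ i in Filter.atTop, |c i * g i {0,1,2} - (3:ℝ)| < 1/100 := by
      have hval : Φ {0,1,2} = (3:ℝ) := by rw [hΦ, rk012 u hu htwo S hS]; norm_num
      have h := Metric.tendsto_nhds.mp (hT {0,1,2}) (1/100) (by norm_num)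
      simpa [Real.dist_eq, hval] using h
    have ev701 : ∀ᶠ i in Filter.atTop, |c i * g i {7,0,1} - (2:ℝ)| < 1/100 := by
      have hval : Φ {7,0,1} = (2:ℝ) := by rw [hΦ, rk701 u hu htwo S hS]; norm_num
      have h := Metric.tendsto_nhds.mp (hT {7,0,1}) (1/100) (by norm_num)
      simpa [Real.dist_eq, hval] using h
    have ev802 : ∀ᶠ i in Filter.atTop, |c i * g i {8,0,2} - (2:ℝ)| < 1/100 := by
      have hval : Φ {8,0,2} = (2:ℝ) := by rw [hΦ, rk802 u hu htwo S hS]; norm_num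
      have h := Metric.tendsto_nhds.mp (hT {8,0,2}) (1/100) (by norm_num)
      simpa [Real.dist_eq, hval] using h
    have ev912 : ∀ᶠ i in Filter.atTop, |c i * g i {9,1,2} - (2:ℝ)| < 1/100 := by
      have hval : Φ {9,1,2} = (2:ℝ) := by rw [hΦ, rk912 u hu htwo S hS]; norm_num
      have h := Metric.tendsto_nhds.mp (hT {9,1,2}) (1/100) (by norm_num)
      simpa [Real.dist_eq, hval] using h
    have ev72 : ∀ᶠ i in Filter.atTop, |c i * g i {7,2} - (2:ℝ)| < 1/100 := by
      have hval : Φ {7,2} = (2:ℝ) := by rw [hΦ, rk72 u hu htwo S hS]; norm_num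
      have h := Metric.tendsto_nhds.mp (hT {7,2}) (1/100) (by norm_num)
      simpa [Real.dist_eq, hval] using h
    have ev81 : ∀ᶠ i in Filter.atTop, |c i * g i {8,1} - (2:ℝ)| < 1/100 := by
      have hval : Φ {8,1} = (2:ℝ) := by rw [hΦ, rk81 u hu htwo S hS]; norm_num
      have h := Metric.tendsto_nhds.mp (hT {8,1}) (1/100) (by norm_num)
      simpa [Real.dist_eq, hval] using h
    have ev90 : ∀ᶠ i in Filter.atTop, |c i * g i {9,0} - (2:ℝ)| < 1/100 := by
      have hval : Φ {9,0} = (2:ℝ) := by rw [hΦ, rk90 u hu htwo S hS]; norm_num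
      have h := Metric.tendsto_nhds.mp (hT {9,0}) (1/100) (by norm_num)
      simpa [Real.dist_eq, hval] using h
    have ev572 : ∀ᶠ i in Filter.atTop, |c i * g i {5,7,2} - (2:ℝ)| < 1/100 := by
      have hval : Φ {5,7,2} = (2:ℝ) := by rw [hΦ, rk572 u hu htwo S hS]; norm_num
      have h := Metric.tendsto_nhds.mp (hT {5,7,2}) (1/100) (by norm_num)
      simpa [Real.dist_eq, hval] using h
    have ev581 : ∀ᶠ i in Filter.atTop, |c i * g i {5,8,1} - (2:ℝ)| < 1/100 := by
      have hval : Φ {5,8,1} = (2:ℝ) := by rw [hΦ, rk581 u hu htwo S hS]; norm_num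
      have h := Metric.tendsto_nhds.mp (hT {5,8,1}) (1/100) (by norm_num)
      simpa [Real.dist_eq, hval] using h
    have ev590 : ∀ᶠ i in Filter.atTop, |c i * g i {5,9,0} - (2:ℝ)| < 1/100 := by
      have hval : Φ {5,9,0} = (2:ℝ) := by rw [hΦ, rk590 u hu htwo S hS]; norm_num
      have h := Metric.tendsto_nhds.mp (hT {5,9,0}) (1/100) (by norm_num)
      simpa [Real.dist_eq, hval] using h
    have ev50 : ∀ᶠ i in Filter.atTop, |c i * g i {5,0} - (2:ℝ)| < 1/100 := by
      have hval : Φ {5,0} = (2:ℝ) := by rw [hΦ, rk50 u hu htwo S hS]; norm_num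
      have h := Metric.tendsto_nhds.mp (hT {5,0}) (1/100) (by norm_num)
      simpa [Real.dist_eq, hval] using h
    have ev78 : ∀ᶠ i in Filter.atTop, |c i * g i {7,8} - (2:ℝ)| < 1/100 := by
      have hval : Φ {7,8} = (2:ℝ) := by rw [hΦ, rk78 u hu htwo S hS]; norm_num
      have h := Metric.tendsto_nhds.mp (hT {7,8}) (1/100) (by norm_num)
      simpa [Real.dist_eq, hval] using h
    have ev789 : ∀ᶠ i in Filter.atTop, |c i * g i {7,8,9} - (3:ℝ)| < 1/100 := by
      have hval : Φ {7,8,9} = (3:ℝ) := by rw [hΦ, rk789 u hu htwo S hS]; norm_num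
      have h := Metric.tendsto_nhds.mp (hT {7,8,9}) (1/100) (by norm_num)
      simpa [Real.dist_eq, hval] using h
    obtain ⟨i, b0, b5, b7, b8, b9, b01, b02, b12, b012, b701, b802, b912, b72, b81, b90, b572, b581, b590, b50, b78, b789⟩ := ((ev0.and (ev5.and (ev7.and (ev8.and (ev9.and (ev01.and (ev02.and (ev12.and (ev012.and (ev701.and (ev802.and (ev912.and (ev72.and (ev81.and (ev90.and (ev572.and (ev581.and (ev590.and (ev50.and (ev78.and ev789))))))))))))))))))))).exists
    obtain ⟨r, m, hm, hcard⟩ := hEv i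
    letI := r.fieldF
    letI := r.fintypeF
    letI := r.addCommGroupW
    letI := r.moduleW
    letI := r.finiteDimensionalW
    have hF2 : (2 : r.F) = 0 := by
      haveI hcp := ringChar.charP r.F
      obtain ⟨n, hpr, hcd⟩ := FiniteField.card r.F (ringChar r.F)
      rw [Nat.card_eq_fintype_card, hcd] at hcard
      have h1 : ringChar r.F ∣ ringChar r.F ^ (n:ℕ) := dvd_pow_self _ n.ne_zero
      rw [hcard] at h1
      have h2 : ringChar r.F ∣ 2 := hpr.dvd_of_dvd_pow h1
      have hrc : ringChar r.F = 2 := (Nat.prime_dvd_prime_iff_eq hpr Nat.prime_two).mp h2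
      haveI : CharP r.F 2 := hrc ▸ ringChar.charP r.F
      exact_mod_cast CharP.cast_eq_zero r.F 2
    have h2W : ∀ x : r.W, x + x = 0 := by
      intro x
      have hx : (2 : r.F) • x = 0 := by rw [hF2, zero_smul]
      rwa [two_smul] at hx
    have B0 : |c i * ((Module.finrank r.F ↥(r.V 0) : ℕ) : ℝ) - (1:ℝ)| < 1/100 := by
      rw [show (r.V 0 : Submodule r.F r.W) = ({0} : Finset (Fin 13)).sup r.V from by simp [Finset.sup_insert, Finset.sup_singleton]]
      rw [← r.rank_eq]
      exact b0
    have B5 : |c i * ((Module.finrank r.F ↥(r.V 5) : ℕ) : ℝ) - (1:ℝ)| < 1/100 := by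
      rw [show (r.V 5 : Submodule r.F r.W) = ({5} : Finset (Fin 13)).sup r.V from by simp [Finset.sup_insert, Finset.sup_singleton]]
      rw [← r.rank_eq]
      exact b5
    have B7 : |c i * ((Module.finrank r.F ↥(r.V 7) : ℕ) : ℝ) - (1:ℝ)| < 1/100 := by
      rw [show (r.V 7 : Submodule r.F r.W) = ({7} : Finset (Fin 13)).sup r.V from by simp [Finset.sup_insert, Finset.sup_singleton]]
      rw [← r.rank_eq]
      exact b7
    have B8 : |c i * ((Module.finrank r.F ↥(r.V 8) : ℕ) : ℝ) - (1:ℝ)| < 1/100 := by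
      rw [show (r.V 8 : Submodule r.F r.W) = ({8} : Finset (Fin 13)).sup r.V from by simp [Finset.sup_insert, Finset.sup_singleton]]
      rw [← r.rank_eq]
      exact b8
    have B9 : |c i * ((Module.finrank r.F ↥(r.V 9) : ℕ) : ℝ) - (1:ℝ)| < 1/100 := by
      rw [show (r.V 9 : Submodule r.F r.W) = ({9} : Finset (Fin 13)).sup r.V from by simp [Finset.sup_insert, Finset.sup_singleton]]
      rw [← r.rank_eq]
      exact b9
    have B01 : |c i * ((Module.finrank r.F ↥(r.V 0 ⊔ r.V 1) : ℕ) : ℝ) - (2:ℝ)| < 1/100 := by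
      rw [show (r.V 0 ⊔ r.V 1 : Submodule r.F r.W) = ({0,1} : Finset (Fin 13)).sup r.V from by simp [Finset.sup_insert, Finset.sup_singleton]]
      rw [← r.rank_eq]
      exact b01
    have B02 : |c i * ((Module.finrank r.F ↥(r.V 0 ⊔ r.V 2) : ℕ) : ℝ) - (2:ℝ)| < 1/100 := by
      rw [show (r.V 0 ⊔ r.V 2 : Submodule r.F r.W) = ({0,2} : Finset (Fin 13)).sup r.V from by simp [Finset.sup_insert, Finset.sup_singleton]]
      rw [← r.rank_eq]
      exact b02
    have B12 : |c i * ((Module.finrank r.F ↥(r.V 1 ⊔ r.V 2) : ℕ) : ℝ) - (2:ℝ)| < 1/100 := by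
      rw [show (r.V 1 ⊔ r.V 2 : Submodule r.F r.W) = ({1,2} : Finset (Fin 13)).sup r.V from by simp [Finset.sup_insert, Finset.sup_singleton]]
      rw [← r.rank_eq]
      exact b12
    have B012 : |c i * ((Module.finrank r.F ↥(r.V 0 ⊔ (r.V 1 ⊔ r.V 2)) : ℕ) : ℝ) - (3:ℝ)| < 1/100 := by
      rw [show (r.V 0 ⊔ (r.V 1 ⊔ r.V 2) : Submodule r.F r.W) = ({0,1,2} : Finset (Fin 13)).sup r.V from by simp [Finset.sup_insert, Finset.sup_singleton]]
      rw [← r.rank_eq]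
      exact b012
    have B701 : |c i * ((Module.finrank r.F ↥(r.V 7 ⊔ (r.V 0 ⊔ r.V 1)) : ℕ) : ℝ) - (2:ℝ)| < 1/100 := by
      rw [show (r.V 7 ⊔ (r.V 0 ⊔ r.V 1) : Submodule r.F r.W) = ({7,0,1} : Finset (Fin 13)).sup r.V from by simp [Finset.sup_insert, Finset.sup_singleton]]
      rw [← r.rank_eq]
      exact b701
    have B802 : |c i * ((Module.finrank r.F ↥(r.V 8 ⊔ (r.V 0 ⊔ r.V 2)) : ℕ) : ℝ) - (2:ℝ)| < 1/100 := by
      rw [show (r.V 8 ⊔ (r.V 0 ⊔ r.V 2) : Submodule r.F r.W) = ({8,0,2} : Finset (Fin 13)).sup r.V from by simp [Finset.sup_insert, Finset.sup_singleton]]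
      rw [← r.rank_eq]
      exact b802
    have B912 : |c i * ((Module.finrank r.F ↥(r.V 9 ⊔ (r.V 1 ⊔ r.V 2)) : ℕ) : ℝ) - (2:ℝ)| < 1/100 := by
      rw [show (r.V 9 ⊔ (r.V 1 ⊔ r.V 2) : Submodule r.F r.W) = ({9,1,2} : Finset (Fin 13)).sup r.V from by simp [Finset.sup_insert, Finset.sup_singleton]]
      rw [← r.rank_eq]
      exact b912
    have B72 : |c i * ((Module.finrank r.F ↥(r.V 7 ⊔ r.V 2) : ℕ) : ℝ) - (2:ℝ)| < 1/100 := by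
      rw [show (r.V 7 ⊔ r.V 2 : Submodule r.F r.W) = ({7,2} : Finset (Fin 13)).sup r.V from by simp [Finset.sup_insert, Finset.sup_singleton]]
      rw [← r.rank_eq]
      exact b72
    have B81 : |c i * ((Module.finrank r.F ↥(r.V 8 ⊔ r.V 1) : ℕ) : ℝ) - (2:ℝ)| < 1/100 := by
      rw [show (r.V 8 ⊔ r.V 1 : Submodule r.F r.W) = ({8,1} : Finset (Fin 13)).sup r.V from by simp [Finset.sup_insert, Finset.sup_singleton]]
      rw [← r.rank_eq]
      exact b81
    have B90 : |c i * ((Module.finrank r.F ↥(r.V 9 ⊔ r.V 0) : ℕ) : ℝ) - (2:ℝ)| < 1/100 := by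
      rw [show (r.V 9 ⊔ r.V 0 : Submodule r.F r.W) = ({9,0} : Finset (Fin 13)).sup r.V from by simp [Finset.sup_insert, Finset.sup_singleton]]
      rw [← r.rank_eq]
      exact b90
    have B572 : |c i * ((Module.finrank r.F ↥(r.V 5 ⊔ (r.V 7 ⊔ r.V 2)) : ℕ) : ℝ) - (2:ℝ)| < 1/100 := by
      rw [show (r.V 5 ⊔ (r.V 7 ⊔ r.V 2) : Submodule r.F r.W) = ({5,7,2} : Finset (Fin 13)).sup r.V from by simp [Finset.sup_insert, Finset.sup_singleton]]
      rw [← r.rank_eq]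
      exact b572
    have B581 : |c i * ((Module.finrank r.F ↥(r.V 5 ⊔ (r.V 8 ⊔ r.V 1)) : ℕ) : ℝ) - (2:ℝ)| < 1/100 := by
      rw [show (r.V 5 ⊔ (r.V 8 ⊔ r.V 1) : Submodule r.F r.W) = ({5,8,1} : Finset (Fin 13)).sup r.V from by simp [Finset.sup_insert, Finset.sup_singleton]]
      rw [← r.rank_eq]
      exact b581
    have B590 : |c i * ((Module.finrank r.F ↥(r.V 5 ⊔ (r.V 9 ⊔ r.V 0)) : ℕ) : ℝ) - (2:ℝ)| < 1/100 := by
      rw [show (r.V 5 ⊔ (r.V 9 ⊔ r.V 0) : Submodule r.F r.W) = ({5,9,0} : Finset (Fin 13)).sup r.V from by simp [Finset.sup_insert, Finset.sup_singleton]]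
      rw [← r.rank_eq]
      exact b590
    have B50 : |c i * ((Module.finrank r.F ↥(r.V 5 ⊔ r.V 0) : ℕ) : ℝ) - (2:ℝ)| < 1/100 := by
      rw [show (r.V 5 ⊔ r.V 0 : Submodule r.F r.W) = ({5,0} : Finset (Fin 13)).sup r.V from by simp [Finset.sup_insert, Finset.sup_singleton]]
      rw [← r.rank_eq]
      exact b50
    have B78 : |c i * ((Module.finrank r.F ↥(r.V 7 ⊔ r.V 8) : ℕ) : ℝ) - (2:ℝ)| < 1/100 := by
      rw [show (r.V 7 ⊔ r.V 8 : Submodule r.F r.W) = ({7,8} : Finset (Fin 13)).sup r.V from by simp [Finset.sup_insert, Finset.sup_singleton]]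
      rw [← r.rank_eq]
      exact b78
    have B789 : |c i * ((Module.finrank r.F ↥(r.V 7 ⊔ (r.V 8 ⊔ r.V 9)) : ℕ) : ℝ) - (3:ℝ)| < 1/100 := by
      rw [show (r.V 7 ⊔ (r.V 8 ⊔ r.V 9) : Submodule r.F r.W) = ({7,8,9} : Finset (Fin 13)).sup r.V from by simp [Finset.sup_insert, Finset.sup_singleton]]
      rw [← r.rank_eq]
      exact b789
    exact mainEstimate h2W (r.V 0) (r.V 1) (r.V 2) (r.V 5) (r.V 7) (r.V 8) (r.V 9)
      (fun U => c i * ((Module.finrank r.F ↥U : ℕ) : ℝ))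
      (by intro U V' h; exact mul_le_mul_of_nonneg_left (Nat.cast_le.mpr (Submodule.finrank_mono h)) (hcpos i).le)
      (by intro U V'; rw [← mul_add, ← mul_add]; congr 1; exact_mod_cast Submodule.finrank_sup_add_finrank_inf_eq U V')
      (by intro U; exact mul_nonneg (hcpos i).le (Nat.cast_nonneg _))
      B0 B5 B7 B8 B9 B01 B02 B12 B012 B701 B802 B912 B72 B81 B90 B572 B581 B590 B50 B78 B789
end

section
/- Let B_1, …, B_n and C be subspaces of a finite-dimensional vector space W and let α ⊆ {1,…,n}. Then there exists a subspace A of W such that dim A = dim⟨C, B_j (j∈α)⟩ − dim⟨B_j : j∈α⟩, and for any complementary subspace A* of A (with associated projection T_A onto A* along A), T_A(C) ⊆ ⟨T_A(B_j) : j∈α⟩, i.e., dim⟨T_A(C), T_A(B_j) (j∈α)⟩ − dim⟨T_A(B_j) : j∈α⟩ = 0. -/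
open Module

/-!
Let `V = ⟨C, B_j (j∈α)⟩` and take for `A` a complement of `⟨B_j : j∈α⟩` inside `V`, which has the
required dimension. A projection along `A` kills `A`, so it maps `V = A ⊕ ⟨B_j : j∈α⟩`, and with it
`C`, into the image of `⟨B_j : j∈α⟩`, which is `⟨T_A(B_j) : j∈α⟩`.
-/

namespace Submodule

section Ring

variable {R M N : Type*} [Ring R] [AddCommGroup M] [Module R M] [AddCommGroup N] [Module R N]

theorem map_finsetSup {ι : Type*} (f : M →ₗ[R] N) (s : Finset ι) (p : ι → Submodule R M) :
    (s.sup p).map f = s.sup fun i => (p i).map f :=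
  Finset.apply_sup_eq_sup_comp _ (map_sup · · f) (map_bot f)

theorem le_ker_of_disjoint_of_mem_of_sub_mem {A A' : Submodule R M} {π : M →ₗ[R] M}
    (hAA' : Disjoint A A') (hπ : ∀ u, π u ∈ A' ∧ u - π u ∈ A) : A ≤ LinearMap.ker π := by
  intro a ha
  have hA : π a ∈ A := by simpa using A.sub_mem ha (hπ a).2
  exact (Submodule.disjoint_def.mp hAA') _ hA (hπ a).1

theorem map_le_map_of_le_sup_of_le_ker {A B C : Submodule R M} {f : M →ₗ[R] N}
    (hC : C ≤ A ⊔ B) (hA : A ≤ LinearMap.ker f) : C.map f ≤ B.map f :=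
  calc C.map f ≤ (A ⊔ B).map f := map_mono hC
    _ = B.map f := by rw [map_sup, LinearMap.le_ker_iff_map.mp hA, bot_sup_eq]

end Ring

theorem finrank_eq_sub_of_disjoint_of_sup_eq {K V : Type*} [DivisionRing K] [AddCommGroup V]
    [Module K V] [FiniteDimensional K V] {A B D : Submodule K V} (hAB : Disjoint B A)
    (hD : B ⊔ A = D) : (finrank K A : ℝ) = finrank K D - finrank K B := by
  have h := finrank_sup_add_finrank_inf_eq B A
  rw [hD, hAB.eq_bot, finrank_bot, add_zero] at h
  rw [h]
  push_cast
  ring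

end Submodule

/-- for subspaces `B_1, …, B_n, C` of a finite-dimensional space `W` and
`α ⊆ {1,…,n}` there is a subspace `A` with `dim A = dim⟨C, B_j (j∈α)⟩ − dim⟨B_j : j∈α⟩`
such that for any complement `A*` of `A` with projection `π` onto `A*` along `A`,
`T_A(C) ⊆ ⟨T_A(B_j) : j∈α⟩`, i.e.
`dim⟨T_A(C), T_A(B_j) (j∈α)⟩ − dim⟨T_A(B_j) : j∈α⟩ = 0`. -/
theorem exists_subspace_projection_containment {K W : Type} [Field K] [AddCommGroup W]
    [Module K W] [FiniteDimensional K W]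
    (n : ℕ) (B : Fin n → Submodule K W) (C : Submodule K W) (α : Finset (Fin n)) :
    ∃ A : Submodule K W,
      ((finrank K ↥A : ℝ) = (finrank K ↥(C ⊔ α.sup B) : ℝ) - (finrank K ↥(α.sup B) : ℝ))
      ∧ ∀ (Astar : Submodule K W) (π : W →ₗ[K] W),
          IsCompl A Astar → (∀ u : W, π u ∈ Astar ∧ u - π u ∈ A) →
          Submodule.map π C ≤ α.sup (fun j => Submodule.map π (B j))
          ∧ (finrank K ↥(Submodule.map π C ⊔ α.sup fun j => Submodule.map π (B j)) : ℝ)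
              - (finrank K ↥(α.sup fun j => Submodule.map π (B j)) : ℝ) = 0 := by
  obtain ⟨A, hdisj, hsup⟩ :=
    IsModularLattice.exists_disjoint_and_sup_eq (le_sup_right : α.sup B ≤ C ⊔ α.sup B)
  refine ⟨A, Submodule.finrank_eq_sub_of_disjoint_of_sup_eq hdisj hsup, ?_⟩
  intro Astar π hcompl hπ
  have hCle : C ≤ A ⊔ α.sup B := by rw [sup_comm, hsup]; exact le_sup_left
  have hle : C.map π ≤ α.sup fun j => (B j).map π := by
    rw [← Submodule.map_finsetSup]
    exact Submodule.map_le_map_of_le_sup_of_le_ker hCle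
      (Submodule.le_ker_of_disjoint_of_mem_of_sub_mem hcompl.disjoint hπ)
  exact ⟨hle, by rw [sup_of_le_right hle, sub_self]⟩
end

section
/- Let B_1, …, B_n be subspaces of a finite-dimensional vector space W and let β ⊆ {1,…,n}. Then there exists a subspace A of W such that, for any complementary subspace A* of A (with associated projection T_A onto A* along A): (1) dim T_A(B_j) = dim⟨B_i : i∈β⟩ − dim⟨B_i : i∈β∖{j}⟩ for every j ∈ β; (2) dim⟨T_A(B_j) : j∈β⟩ = ∑_{j∈β} dim T_A(B_j); and (3) dim A = dim⟨B_j : j∈β⟩ − ∑_{j∈β} (dim⟨B_i : i∈β⟩ − dim⟨B_i : i∈β∖{j}⟩). -/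
/-!
Take for `A` the part of `S = ⟨B_i : i ∈ β⟩` that survives the omission of any single `B_j`,
`A = S ∩ ⋂_{j ∈ β} S_j` with `S_j = ⟨B_i : i ∈ β ∖ {j}⟩`. Since `B_j ≤ S_i` for `i ≠ j`, every
`B_j ∩ S_j` lies in `A`, so `B_j ∩ A = B_j ∩ S_j` and the projection `T_A` with kernel `A` gives
`dim T_A(B_j) = dim B_j - dim (B_j ∩ S_j) = dim S - dim S_j`. The same inclusions make the images
`T_A(B_j)` independent: if `T_A(b) = T_A(s)` with `b ∈ B_j`, `s ∈ S_j`, then `b - s ∈ A ≤ S_j`,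
so `b ∈ B_j ∩ S_j ≤ A` and `T_A(b) = 0`. Rank–nullity on `S ⊇ A` then yields `dim A`.
-/

open Module Submodule

section Lattice

variable {α ι : Type*} [Lattice α] [BoundedOrder α] [DecidableEq ι]

-- The factor `β.sup B` only matters for `β = ∅`, where the empty infimum is `⊤`.
def redundantSup (B : ι → α) (β : Finset ι) : α :=
  β.sup B ⊓ β.inf fun j => (β.erase j).sup B

variable {B : ι → α} {β : Finset ι} {j : ι}

lemma redundantSup_le_sup : redundantSup B β ≤ β.sup B := inf_le_left

lemma redundantSup_le_sup_erase (hj : j ∈ β) : redundantSup B β ≤ (β.erase j).sup B :=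
  inf_le_right.trans (Finset.inf_le hj)

lemma inf_sup_erase_le_redundantSup (hj : j ∈ β) :
    B j ⊓ (β.erase j).sup B ≤ redundantSup B β := by
  refine le_inf (inf_le_left.trans (Finset.le_sup hj)) (Finset.le_inf fun i hi => ?_)
  obtain rfl | hij := eq_or_ne i j
  · exact inf_le_right
  · exact inf_le_left.trans (Finset.le_sup (Finset.mem_erase.2 ⟨hij.symm, hj⟩))

lemma inf_redundantSup_eq (hj : j ∈ β) : B j ⊓ redundantSup B β = B j ⊓ (β.erase j).sup B :=
  le_antisymm (inf_le_inf_left _ (redundantSup_le_sup_erase hj))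
    (le_inf inf_le_left (inf_sup_erase_le_redundantSup hj))

end Lattice

section Projection

variable {R M M' ι : Type*} [Ring R] [AddCommGroup M] [Module R M] [AddCommGroup M'] [Module R M']

lemma LinearMap.ker_eq_of_disjoint_of_mem_of_sub_mem {A A' : Submodule R M} {π : M →ₗ[R] M}
    (hA : Disjoint A A') (hπ : ∀ u, π u ∈ A' ∧ u - π u ∈ A) : LinearMap.ker π = A := by
  ext u
  refine ⟨fun hu => by simpa [LinearMap.mem_ker.1 hu] using (hπ u).2, fun hu => ?_⟩
  have hπA : π u ∈ A := by simpa using sub_mem hu (hπ u).2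
  exact hA.le_bot ⟨hπA, (hπ u).1⟩

lemma Submodule.disjoint_map_of_inf_le_ker (f : M →ₗ[R] M') {p q : Submodule R M}
    (hpq : p ⊓ q ≤ LinearMap.ker f) (hq : LinearMap.ker f ≤ q) :
    Disjoint (p.map f) (q.map f) := by
  rw [Submodule.disjoint_def]
  rintro _ ⟨b, hb, rfl⟩ ⟨s, hs, hfs⟩
  have hbs : b - s ∈ LinearMap.ker f := by simp [hfs]
  have hbq : b ∈ q := by simpa using add_mem (hq hbs) hs
  exact hpq ⟨hb, hbq⟩

lemma Submodule.map_finsetSup_s16 (f : M →ₗ[R] M') (s : Finset ι) (p : ι → Submodule R M) :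
    (s.sup p).map f = s.sup fun i => (p i).map f :=
  Finset.apply_sup_eq_sup_comp _ (fun _ _ => map_sup _ _ f) (map_bot f)

lemma supIndep_map_of_ker_eq_redundantSup [DecidableEq ι] {B : ι → Submodule R M} {β : Finset ι}
    {f : M →ₗ[R] M'} (hf : LinearMap.ker f = redundantSup B β) :
    β.SupIndep fun j => (B j).map f := by
  refine Finset.supIndep_iff_disjoint_erase.2 fun j hj => ?_
  rw [← map_finsetSup_s16]
  exact disjoint_map_of_inf_le_ker f (hf ▸ inf_sup_erase_le_redundantSup hj)
    (hf ▸ redundantSup_le_sup_erase hj)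

end Projection

section FiniteDimensional

variable {K V V' ι : Type*} [Field K] [AddCommGroup V] [Module K V] [FiniteDimensional K V]
  [AddCommGroup V'] [Module K V']

lemma Submodule.finrank_map_add_finrank_inf_ker (f : V →ₗ[K] V') (p : Submodule K V) :
    finrank K (p.map f) + finrank K ↥(p ⊓ LinearMap.ker f) = finrank K p := by
  have h := LinearMap.finrank_range_add_finrank_ker (f.domRestrict p)
  have hker :
      finrank K ↥(comap p.subtype (LinearMap.ker f)) = finrank K ↥(p ⊓ LinearMap.ker f) := by
    rw [← (comapSubtypeEquivOfLe inf_le_left).finrank_eq, comap_inf, comap_subtype_self, top_inf_eq]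
  rwa [LinearMap.range_domRestrict, LinearMap.ker_domRestrict, hker] at h

lemma Finset.SupIndep.finrank_sup {s : Finset ι} {p : ι → Submodule K V} (h : s.SupIndep p) :
    finrank K ↥(s.sup p) = ∑ i ∈ s, finrank K (p i) := by
  induction s using Finset.cons_induction with
  | empty => simp
  | cons i s hi ih =>
    have hdisj : Disjoint (p i) (s.sup p) := h (Finset.subset_cons hi) (Finset.mem_cons_self i s) hi
    have hsum := finrank_sup_add_finrank_inf_eq (p i) (s.sup p)
    rw [hdisj.eq_bot, finrank_bot, add_zero] at hsum
    rw [Finset.sup_cons, Finset.sum_cons, hsum, ih (h.subset (Finset.subset_cons hi))]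

variable [DecidableEq ι] {B : ι → Submodule K V} {β : Finset ι} {f : V →ₗ[K] V'}

lemma finrank_map_add_finrank_sup_erase (hf : LinearMap.ker f = redundantSup B β) {j : ι}
    (hj : j ∈ β) :
    finrank K ((B j).map f) + finrank K ↥((β.erase j).sup B) = finrank K ↥(β.sup B) := by
  have hmap := finrank_map_add_finrank_inf_ker f (B j)
  have hsup := finrank_sup_add_finrank_inf_eq (B j) ((β.erase j).sup B)
  rw [hf, inf_redundantSup_eq hj] at hmap
  rw [← Finset.sup_insert, Finset.insert_erase hj] at hsup
  omega

end FiniteDimensional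

/-- for subspaces `B_1, …, B_n` of a finite-dimensional space `W` and
`β ⊆ {1,…,n}` there is a subspace `A` such that, for any complement `A*` of `A` with
projection `π` onto `A*` along `A`:
(1) `dim T_A(B_j) = dim⟨B_i : i∈β⟩ − dim⟨B_i : i∈β∖{j}⟩` for every `j ∈ β`;
(2) `dim⟨T_A(B_j) : j∈β⟩ = ∑_{j∈β} dim T_A(B_j)`;
(3) `dim A = dim⟨B_j : j∈β⟩ − ∑_{j∈β} (dim⟨B_i : i∈β⟩ − dim⟨B_i : i∈β∖{j}⟩)`. -/
theorem exists_subspace_projection_independence {K W : Type} [Field K] [AddCommGroup W]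
    [Module K W] [FiniteDimensional K W]
    (n : ℕ) (B : Fin n → Submodule K W) (β : Finset (Fin n)) :
    ∃ A : Submodule K W,
      ∀ (Astar : Submodule K W) (π : W →ₗ[K] W),
        IsCompl A Astar → (∀ u : W, π u ∈ Astar ∧ u - π u ∈ A) →
        (∀ j ∈ β, (finrank K ↥(Submodule.map π (B j)) : ℝ)
            = (finrank K ↥(β.sup B) : ℝ) - (finrank K ↥((β.erase j).sup B) : ℝ))
        ∧ ((finrank K ↥(β.sup fun j => Submodule.map π (B j)) : ℝ)
            = ∑ j ∈ β, (finrank K ↥(Submodule.map π (B j)) : ℝ))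
        ∧ ((finrank K ↥A : ℝ) = (finrank K ↥(β.sup B) : ℝ)
            - ∑ j ∈ β, ((finrank K ↥(β.sup B) : ℝ) - (finrank K ↥((β.erase j).sup B) : ℝ))) := by
  refine ⟨redundantSup B β, fun Astar π hcompl hπ => ?_⟩
  have hker := LinearMap.ker_eq_of_disjoint_of_mem_of_sub_mem hcompl.disjoint hπ
  have hdim : ∀ j ∈ β, (finrank K ↥((B j).map π) : ℝ)
      = finrank K ↥(β.sup B) - finrank K ↥((β.erase j).sup B) := fun j hj => by
    rw [← finrank_map_add_finrank_sup_erase hker hj]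
    push_cast
    ring
  have hindep : (finrank K ↥(β.sup fun j => (B j).map π) : ℝ)
      = ∑ j ∈ β, (finrank K ↥((B j).map π) : ℝ) := by
    exact_mod_cast (supIndep_map_of_ker_eq_redundantSup hker).finrank_sup
  refine ⟨hdim, hindep, ?_⟩
  have hnull := finrank_map_add_finrank_inf_ker π (β.sup B)
  rw [hker, inf_eq_right.2 redundantSup_le_sup, map_finsetSup_s16] at hnull
  rw [← Finset.sum_congr rfl hdim, ← hindep, ← hnull]
  push_cast
  ring
end

section
/- Let Y_1, Y_2, Y_3, W_1, W_2, W_3, W_4 be subspaces of a finite-dimensional vector space over a finite field of odd characteristic satisfying: dim⟨Y_1,Y_2,Y_3⟩ = dim Y_1 + dim Y_2 + dim Y_3; W_1 ⊆ ⟨Y_1,Y_2⟩; W_2 ⊆ ⟨Y_2,Y_3⟩; W_3 ⊆ ⟨Y_1,W_2⟩; W_4 ⊆ ⟨W_1,W_2⟩; Y_1 ⊆ ⟨Y_3,W_4⟩; Y_2 ⊆ ⟨W_3,W_4⟩; and Y_3 ⊆ ⟨W_1,W_3⟩. Then 5·min(dim Y_1, dim Y_2, dim Y_3) ≤ 4·max(dim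 W_1, dim W_2, dim W_3, dim W_4). -/
open Module

set_option maxHeartbeats 2000000

private theorem dfz_aux17 {k1 k2 k3 w1 w2 w3 w4 dA dB dW1Y2 dW2Y2 dYAB fAB rY2AB rW34
    rABW3 iABW3 rABW34 iABW34 : ℕ}
    (a1 : k1 ≤ dA) (a2 : k3 ≤ dB)
    (a3 : dW1Y2 + k1 ≤ w1) (a4 : dW2Y2 + k3 ≤ w2)
    (a5 : dYAB ≤ dW1Y2 + dW2Y2)
    (a6 : rY2AB + dYAB = k2 + fAB)
    (a7 : rY2AB ≤ rW34)
    (a8 : rABW3 + iABW3 = fAB + w3)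
    (a9 : dB ≤ iABW3)
    (a10 : rABW34 + iABW34 = rABW3 + w4)
    (a11 : dA ≤ iABW34)
    (a12 : rW34 ≤ rABW34) :
    5 * min (min k1 k2) k3 ≤ 4 * max (max (max w1 w2) w3) w4 := by omega


/-- Dougherty–Freiling–Zeger, first network: for subspaces
`Y_1, Y_2, Y_3, W_1, …, W_4` over a finite field of odd characteristic satisfying the
listed independence and containment conditions,
`min(dim Y_i) / max(dim W_j) ≤ 4/5`, i.e.
`5·min(dim Y_1, dim Y_2, dim Y_3) ≤ 4·max(dim W_1, dim W_2, dim W_3, dim W_4)`. -/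
theorem dfz_first_network {K V : Type} [Field K] [Fintype K]
    (p : ℕ) (hp : p.Prime) (hodd : Odd p) [CharP K p]
    [AddCommGroup V] [Module K V] [FiniteDimensional K V]
    (Y1 Y2 Y3 W1 W2 W3 W4 : Submodule K V)
    (hind : finrank K ↥(Y1 ⊔ Y2 ⊔ Y3) = finrank K ↥Y1 + finrank K ↥Y2 + finrank K ↥Y3)
    (h1 : W1 ≤ Y1 ⊔ Y2) (h2 : W2 ≤ Y2 ⊔ Y3) (h3 : W3 ≤ Y1 ⊔ W2) (h4 : W4 ≤ W1 ⊔ W2)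
    (h5 : Y1 ≤ Y3 ⊔ W4) (h6 : Y2 ≤ W3 ⊔ W4) (h7 : Y3 ≤ W1 ⊔ W3) :
    5 * min (min (finrank K ↥Y1) (finrank K ↥Y2)) (finrank K ↥Y3)
      ≤ 4 * max (max (max (finrank K ↥W1) (finrank K ↥W2)) (finrank K ↥W3))
          (finrank K ↥W4) := by
  classical
  have dsum : ∀ s t : Submodule K V,
      finrank K ↥(s ⊔ t) + finrank K ↥(s ⊓ t) = finrank K ↥s + finrank K ↥t :=
    fun s t => Submodule.finrank_sup_add_finrank_inf_eq s t
  -- characteristic fact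
  have h2ne : (2 : K) ≠ 0 := by
    intro h20
    have h2 : ((2 : ℕ) : K) = 0 := by exact_mod_cast h20
    have hdvd : p ∣ 2 := (CharP.cast_eq_zero_iff K p 2).mp h2
    have hp2 : p = 2 := (Nat.prime_dvd_prime_iff_eq hp Nat.prime_two).mp hdvd
    rw [hp2] at hodd
    exact (by decide : ¬ Odd 2) hodd
  -- independence consequences
  have e23 := dsum Y2 Y3
  have e1_23 := dsum Y1 (Y2 ⊔ Y3)
  have hassoc : Y1 ⊔ Y2 ⊔ Y3 = Y1 ⊔ (Y2 ⊔ Y3) := sup_assoc Y1 Y2 Y3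
  have hind' : finrank K ↥(Y1 ⊔ (Y2 ⊔ Y3))
      = finrank K ↥Y1 + finrank K ↥Y2 + finrank K ↥Y3 := by rw [← hassoc]; exact hind
  have hr23 : finrank K ↥(Y2 ⊔ Y3) = finrank K ↥Y2 + finrank K ↥Y3 ∧
      finrank K ↥(Y2 ⊓ Y3) = 0 ∧ finrank K ↥(Y1 ⊓ (Y2 ⊔ Y3)) = 0 := by omega
  have hbot23 : Y2 ⊓ Y3 = ⊥ := Submodule.finrank_eq_zero.mp hr23.2.1
  have hbot1 : Y1 ⊓ (Y2 ⊔ Y3) = ⊥ := Submodule.finrank_eq_zero.mp hr23.2.2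
  have e12 := dsum Y1 Y2
  have e12_3 := dsum (Y1 ⊔ Y2) Y3
  have hr12 : finrank K ↥(Y1 ⊔ Y2) = finrank K ↥Y1 + finrank K ↥Y2 ∧
      finrank K ↥((Y1 ⊔ Y2) ⊓ Y3) = 0 := by omega
  have hbot12_3 : (Y1 ⊔ Y2) ⊓ Y3 = ⊥ := Submodule.finrank_eq_zero.mp hr12.2
  -- dim (Y1 ⊔ Y3) ≥ k1 + k3
  have e13 := dsum Y1 Y3
  have e13_2 := dsum (Y1 ⊔ Y3) Y2
  have h132 : Y1 ⊔ Y2 ⊔ Y3 ≤ (Y1 ⊔ Y3) ⊔ Y2 := by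
    refine sup_le (sup_le ?_ ?_) ?_
    · exact le_sup_left.trans le_sup_left
    · exact le_sup_right
    · exact le_sup_right.trans le_sup_left
  have h132' : finrank K ↥(Y1 ⊔ Y2 ⊔ Y3) ≤ finrank K ↥((Y1 ⊔ Y3) ⊔ Y2) :=
    Submodule.finrank_mono h132
  have hr13 : finrank K ↥Y1 + finrank K ↥Y3 ≤ finrank K ↥(Y1 ⊔ Y3) := by omega
  -- zero-sum lemma
  have hz : ∀ x1 x2 x3 : V, x1 ∈ Y1 → x2 ∈ Y2 → x3 ∈ Y3 → x1 + x2 + x3 = 0 →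
      x1 = 0 ∧ x2 = 0 ∧ x3 = 0 := by
    intro x1 x2 x3 hx1 hx2 hx3 hsum
    have hm : x1 ∈ Y1 ⊓ (Y2 ⊔ Y3) := by
      refine ⟨hx1, ?_⟩
      have : x1 = -(x2 + x3) := by
        have : x1 + (x2 + x3) = 0 := by rw [← hsum]; abel
        exact eq_neg_of_add_eq_zero_left this
      rw [this]
      exact neg_mem (Submodule.add_mem_sup hx2 hx3)
    rw [hbot1] at hm
    have hx10 : x1 = 0 := (Submodule.mem_bot K).mp hm
    have hm2 : x2 ∈ Y2 ⊓ Y3 := by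
      refine ⟨hx2, ?_⟩
      have : x2 = -x3 := by
        have : x2 + x3 = 0 := by rw [hx10] at hsum; rw [← hsum]; abel
        exact eq_neg_of_add_eq_zero_left this
      rw [this]; exact neg_mem hx3
    rw [hbot23] at hm2
    have hx20 : x2 = 0 := (Submodule.mem_bot K).mp hm2
    refine ⟨hx10, hx20, ?_⟩
    rw [hx10, hx20] at hsum; simpa using hsum
  -- dim A ≥ k1
  have eA := dsum W4 (Y1 ⊔ Y3)
  have hW4sup : W4 ⊔ (Y1 ⊔ Y3) ≤ W4 ⊔ Y3 := by
    refine sup_le le_sup_left (sup_le ?_ le_sup_right)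
    exact h5.trans (sup_comm Y3 W4).le
  have eW4Y3 := dsum W4 Y3
  have hW4sup' : finrank K ↥(W4 ⊔ (Y1 ⊔ Y3)) ≤ finrank K ↥(W4 ⊔ Y3) :=
    Submodule.finrank_mono hW4sup
  have hdimA : finrank K ↥Y1 ≤ finrank K ↥(W4 ⊓ (Y1 ⊔ Y3)) := by omega
  -- dim B ≥ k3
  have eB := dsum W3 (W1 ⊔ Y3)
  have eW1Y3 := dsum W1 Y3
  have hW1Y3bot : W1 ⊓ Y3 = ⊥ := by
    have : W1 ⊓ Y3 ≤ (Y1 ⊔ Y2) ⊓ Y3 := inf_le_inf_right Y3 h1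
    rw [hbot12_3] at this
    exact le_bot_iff.mp this
  have hW1Y3rank : finrank K ↥(W1 ⊓ Y3) = 0 := by rw [hW1Y3bot]; exact finrank_bot K V
  have hW3sup : W3 ⊔ (W1 ⊔ Y3) ≤ W3 ⊔ W1 := by
    refine sup_le le_sup_left (sup_le le_sup_right ?_)
    exact h7.trans (sup_comm W1 W3).le
  have hW3sup' : finrank K ↥(W3 ⊔ (W1 ⊔ Y3)) ≤ finrank K ↥(W3 ⊔ W1) :=
    Submodule.finrank_mono hW3sup
  have eW3W1 := dsum W3 W1
  have hdimB : finrank K ↥Y3 ≤ finrank K ↥(W3 ⊓ (W1 ⊔ Y3)) := by omega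
  -- S1 : dim (W1 ⊓ Y2) + k1 ≤ w1
  have eS1 := dsum W1 (Y2 ⊔ Y3)
  have hY1le : Y1 ≤ W1 ⊔ (Y2 ⊔ Y3) := by
    refine h5.trans (sup_le (le_sup_right.trans le_sup_right) ?_)
    exact h4.trans (sup_le le_sup_left (h2.trans le_sup_right))
  have hUle1 : Y1 ⊔ Y2 ⊔ Y3 ≤ W1 ⊔ (Y2 ⊔ Y3) := by
    refine sup_le (sup_le hY1le ?_) ?_
    · exact le_sup_left.trans le_sup_right
    · exact le_sup_right.trans le_sup_right
  have hUle1' : finrank K ↥(Y1 ⊔ Y2 ⊔ Y3) ≤ finrank K ↥(W1 ⊔ (Y2 ⊔ Y3)) :=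
    Submodule.finrank_mono hUle1
  have hW1Y2mono : finrank K ↥(W1 ⊓ Y2) ≤ finrank K ↥(W1 ⊓ (Y2 ⊔ Y3)) :=
    Submodule.finrank_mono (inf_le_inf_left W1 le_sup_left)
  have hc2 : finrank K ↥(W1 ⊓ Y2) + finrank K ↥Y1 ≤ finrank K ↥W1 := by omega
  -- S2 : dim (W2 ⊓ Y2) + k3 ≤ w2
  have eS2 := dsum W2 (Y1 ⊔ Y2)
  have hY3le : Y3 ≤ W2 ⊔ (Y1 ⊔ Y2) := by
    refine h7.trans (sup_le (h1.trans le_sup_right) ?_)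
    exact h3.trans (sup_le (le_sup_left.trans le_sup_right) le_sup_left)
  have hUle2 : Y1 ⊔ Y2 ⊔ Y3 ≤ W2 ⊔ (Y1 ⊔ Y2) := by
    refine sup_le (sup_le ?_ ?_) hY3le
    · exact le_sup_left.trans le_sup_right
    · exact le_sup_right.trans le_sup_right
  have hUle2' : finrank K ↥(Y1 ⊔ Y2 ⊔ Y3) ≤ finrank K ↥(W2 ⊔ (Y1 ⊔ Y2)) :=
    Submodule.finrank_mono hUle2
  have hW2Y2mono : finrank K ↥(W2 ⊓ Y2) ≤ finrank K ↥(W2 ⊓ (Y1 ⊔ Y2)) :=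
    Submodule.finrank_mono (inf_le_inf_left W2 le_sup_right)
  have hc3 : finrank K ↥(W2 ⊓ Y2) + finrank K ↥Y3 ≤ finrank K ↥W2 := by omega
  -- CORE : odd characteristic step
  have hcore : Y2 ⊓ ((W4 ⊓ (Y1 ⊔ Y3)) ⊔ (W3 ⊓ (W1 ⊔ Y3))) ≤ (W1 ⊓ Y2) ⊔ (W2 ⊓ Y2) := by
    intro x hx
    obtain ⟨hx2, hxAB⟩ := hx
    obtain ⟨a, ha, b, hb, hab⟩ := Submodule.mem_sup.mp hxAB
    obtain ⟨ha4, haY⟩ := ha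
    obtain ⟨hb3, hbWY⟩ := hb
    obtain ⟨y1, hy1, c, hc, hy1c⟩ := Submodule.mem_sup.mp haY
    obtain ⟨u, hu, v', hv', huv⟩ := Submodule.mem_sup.mp (h4 ha4)
    obtain ⟨w, hw, z, hz3, hwz⟩ := Submodule.mem_sup.mp hbWY
    obtain ⟨a', ha', v, hv, ha'v⟩ := Submodule.mem_sup.mp (h3 hb3)
    obtain ⟨u1, hu1, u2, hu2, hu12⟩ := Submodule.mem_sup.mp (h1 hu)
    obtain ⟨w1', hw1', w2', hw2', hw12⟩ := Submodule.mem_sup.mp (h1 hw)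
    obtain ⟨v2, hv2, v3, hv3, hv23⟩ := Submodule.mem_sup.mp (h2 hv)
    obtain ⟨v2', hv2', v3', hv3', hv23'⟩ := Submodule.mem_sup.mp (h2 hv')
    -- equation 1 : x = a + b
    have E1 := hz (y1 + w1') (w2' - x) (c + z) (add_mem hy1 hw1') (sub_mem hw2' hx2)
      (add_mem hc hz3)
      (by rw [← hab, ← hy1c, ← hwz, ← hw12]; abel)
    -- equation 2 : u + v' = a = y1 + c
    have h2eq : (u1 + u2) + (v2' + v3') = y1 + c := by
      rw [hu12, hv23', huv, ← hy1c]
    have E2 := hz (u1 - y1) (u2 + v2') (v3' - c) (sub_mem hu1 hy1) (add_mem hu2 hv2')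
      (sub_mem hv3' hc)
      (by have h0 := sub_eq_zero_of_eq h2eq; rw [← h0]; abel)
    -- equation 3 : a' + v = b = w + z
    have h3eq : a' + (v2 + v3) = (w1' + w2') + z := by
      rw [hv23, hw12, ha'v, hwz]
    have E3 := hz (a' - w1') (v2 - w2') (v3 - z) (sub_mem ha' hw1') (sub_mem hv2 hw2')
      (sub_mem hv3 hz3)
      (by have h0 := sub_eq_zero_of_eq h3eq; rw [← h0]; abel)
    -- extract the component identities
    have l1 : u1 = y1 := by have := E2.1; rwa [sub_eq_zero] at this
    have l2 : w1' = -y1 := eq_neg_of_add_eq_zero_right E1.1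
    have l3 : w2' = x := by have := E1.2.1; rwa [sub_eq_zero] at this
    have l4 : v2' = -u2 := eq_neg_of_add_eq_zero_right E2.2.1
    have l5 : v3' = c := by have := E2.2.2; rwa [sub_eq_zero] at this
    have l6 : c = -z := eq_neg_of_add_eq_zero_left E1.2.2
    have l7 : v2 = w2' := by have := E3.2.1; rwa [sub_eq_zero] at this
    have l8 : v3 = z := by have := E3.2.2; rwa [sub_eq_zero] at this
    -- the two halves
    have hsY2 : u + w = x + u2 := by
      rw [← hu12, ← hw12, l1, l2, l3]; abel
    have htY2 : v + v' = x - u2 := by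
      rw [← hv23, ← hv23', l4, l5, l6, l7, l3, l8]; abel
    have hs : u + w ∈ W1 ⊓ Y2 := ⟨add_mem hu hw, by rw [hsY2]; exact add_mem hx2 hu2⟩
    have ht : v + v' ∈ W2 ⊓ Y2 := ⟨add_mem hv hv', by rw [htY2]; exact sub_mem hx2 hu2⟩
    have hmem : (u + w) + (v + v') ∈ (W1 ⊓ Y2) ⊔ (W2 ⊓ Y2) := Submodule.add_mem_sup hs ht
    have hxx : x + x = (u + w) + (v + v') := by rw [hsY2, htY2]; abel
    have hxval : x = (2 : K)⁻¹ • (x + x) := by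
      rw [← two_smul K x, smul_smul, inv_mul_cancel₀ h2ne, one_smul]
    rw [hxval, hxx]
    exact Submodule.smul_mem _ _ hmem
  -- counting
  have hcore' : finrank K ↥(Y2 ⊓ ((W4 ⊓ (Y1 ⊔ Y3)) ⊔ (W3 ⊓ (W1 ⊔ Y3)))) ≤ finrank K ↥((W1 ⊓ Y2) ⊔ (W2 ⊓ Y2)) :=
    Submodule.finrank_mono hcore
  have eWW := dsum (W1 ⊓ Y2) (W2 ⊓ Y2)
  have eY2AB := dsum Y2 ((W4 ⊓ (Y1 ⊔ Y3)) ⊔ (W3 ⊓ (W1 ⊔ Y3)))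
  have hY2ABle : Y2 ⊔ ((W4 ⊓ (Y1 ⊔ Y3)) ⊔ (W3 ⊓ (W1 ⊔ Y3))) ≤ W3 ⊔ W4 := by
    refine sup_le h6 (sup_le ?_ ?_)
    · exact inf_le_left.trans le_sup_right
    · exact inf_le_left.trans le_sup_left
  have hY2ABle' : finrank K ↥(Y2 ⊔ ((W4 ⊓ (Y1 ⊔ Y3)) ⊔ (W3 ⊓ (W1 ⊔ Y3)))) ≤ finrank K ↥(W3 ⊔ W4) :=
    Submodule.finrank_mono hY2ABle
  have eABW3 := dsum ((W4 ⊓ (Y1 ⊔ Y3)) ⊔ (W3 ⊓ (W1 ⊔ Y3))) W3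
  have hBle : finrank K ↥(W3 ⊓ (W1 ⊔ Y3)) ≤ finrank K ↥(((W4 ⊓ (Y1 ⊔ Y3)) ⊔ (W3 ⊓ (W1 ⊔ Y3))) ⊓ W3) :=
    Submodule.finrank_mono (le_inf le_sup_right inf_le_left)
  have eABW34 := dsum (((W4 ⊓ (Y1 ⊔ Y3)) ⊔ (W3 ⊓ (W1 ⊔ Y3))) ⊔ W3) W4
  have hAle : finrank K ↥(W4 ⊓ (Y1 ⊔ Y3)) ≤ finrank K ↥((((W4 ⊓ (Y1 ⊔ Y3)) ⊔ (W3 ⊓ (W1 ⊔ Y3))) ⊔ W3) ⊓ W4) :=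
    Submodule.finrank_mono (le_inf (le_sup_left.trans le_sup_left) inf_le_left)
  have hW34le : finrank K ↥(W3 ⊔ W4) ≤ finrank K ↥((((W4 ⊓ (Y1 ⊔ Y3)) ⊔ (W3 ⊓ (W1 ⊔ Y3))) ⊔ W3) ⊔ W4) :=
    Submodule.finrank_mono (sup_le (le_sup_right.trans le_sup_left) le_sup_right)
  -- final arithmetic
  exact dfz_aux17 hdimA hdimB hc2 hc3 (hcore'.trans (Nat.le.intro eWW)) eY2AB hY2ABle'
    eABW3 hBle eABW34 hAle hW34le
end

section
/- Fix a positive integer n and real coefficients c_α for each α ⊆ {1,…,n}, and suppose that ∑_{α⊆{1,…,n}} c_α · dim⟨U_i : i∈α⟩ ≥ 0 holds for every choice of subspaces U_1,…,U_n of every finite-dimensional vector space over every finite field (i.e., the inequality is a valid subspace rank inequality in n variables). Suppose further that on an n-element ground set Y, every rank function in the closure of the convex cone generated by Υ[Y] is almost representable. Then for every finite ground set X, every cc-representable polymatroid h on X, every 0 ≤ ε ≤ h(X), and every choice of subsets V_1,…,V_n ⊆ X, the ε-perturbation g of h (defined by g(A) := min(h(A), h(X) − ε)) satisfies ∑_{α⊆{1,…,n}}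 c_α · g(⋃_{i∈α} V_i) ≥ 0. -/
/-!
The inequality is a continuous linear functional that is nonnegative on representable rank
functions, hence on the closed convex cone they generate. Pulling `h` back along `V` stays in that
cone over `Fin n`, so by hypothesis it is a limit of scaled representable functions `a_k g_k`.
Truncation at `t = h(X) - ε` commutes with the limit, and `min (a_k g_k) t = a_k min g_k (t / a_k)`
lies in the cone: truncating a representable function at a real level is a convex combination of
its truncations at the two neighbouring integers, and truncating at an integer level `m` is again
representable, by projecting onto the quotient by a generic subspace, one generic vector at a
time, after extending scalars to a field larger than the number of subspaces involved.
-/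

open Module Filter Topology

namespace Submodule

lemma baseChange_sup {R M : Type*} (A : Type*) [CommSemiring R] [Semiring A] [Algebra R A]
    [AddCommMonoid M] [Module R M] (p q : Submodule R M) :
    (p ⊔ q).baseChange A = p.baseChange A ⊔ q.baseChange A := by
  rw [← span_eq p, ← span_eq q, ← span_union, baseChange_span, baseChange_span,
    baseChange_span, Set.image_union, span_union]

lemma finrank_baseChange {F W : Type*} (F' : Type*) [Field F] [Field F'] [Algebra F F']
    [AddCommGroup W] [Module F W] (p : Submodule F W) [FiniteDimensional F p] :
    finrank F' (p.baseChange F') = finrank F p := by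
  have hinj : Function.Injective (p.subtype.baseChange F') := by
    rw [LinearMap.baseChange_eq_ltensor]
    exact Module.Flat.lTensor_preserves_injective_linearMap _ p.injective_subtype
  rw [baseChange, LinearMap.finrank_range_of_inj hinj, Module.finrank_baseChange]

variable {F W : Type*} [Field F] [AddCommGroup W] [Module F W]

lemma finrank_map_mkQ_span_singleton_of_notMem {v : W} {S : Submodule F W} (hv : v ∉ S) :
    finrank F (S.map (F ∙ v).mkQ) = finrank F S := by
  have hinj : Function.Injective ((F ∙ v).mkQ.domRestrict S) := by
    rw [LinearMap.injective_domRestrict_iff, ker_mkQ]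
    exact (disjoint_span_singleton' (by rintro rfl; exact hv S.zero_mem)).mpr hv
  rw [← LinearMap.range_domRestrict, LinearMap.finrank_range_of_inj hinj]

lemma finrank_map_mkQ_span_singleton_top [FiniteDimensional F W] {v : W} (hv : v ≠ 0) :
    finrank F ((⊤ : Submodule F W).map (F ∙ v).mkQ) = finrank F W - 1 := by
  rw [map_top, range_mkQ, finrank_top, finrank_quotient, finrank_span_singleton hv]

lemma exists_forall_finrank_map_mkQ_span_singleton_eq_min [FiniteDimensional F W] {ι : Type*}
    [Fintype ι] (S : ι → Submodule F W) (hF : Fintype.card ι + 1 < ENat.card F)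
    (hW : 0 < finrank F W) :
    ∃ v : W, v ≠ 0 ∧
      ∀ i, finrank F ((S i).map (F ∙ v).mkQ) = min (finrank F (S i)) (finrank F W - 1) := by
  classical
  have : Nontrivial W := Module.nontrivial_of_finrank_pos hW
  -- `⊥` is added to the family to force `v ≠ 0`.
  let p : Option {i // S i ≠ ⊤} → Submodule F W := fun o => o.elim ⊥ (fun i => S i)
  have hp : ∀ o, p o ≠ ⊤
    | none => bot_ne_top
    | some i => i.2
  have hcard : (Finset.univ : Finset (Option {i // S i ≠ ⊤})).card < ENat.card F := by
    refine lt_of_le_of_lt ?_ hF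
    simp
  obtain ⟨v, hv⟩ := Set.ne_univ_iff_exists_notMem _ |>.mp
    (iUnion_ssubset_of_forall_ne_top_of_card_lt _ p hp hcard).ne
  simp only [Finset.mem_univ, Set.iUnion_true, Set.mem_iUnion, not_exists] at hv
  have hv0 : v ≠ 0 := fun h => hv none (by simp [p, h])
  refine ⟨v, hv0, fun i => ?_⟩
  by_cases htop : S i = ⊤
  · rw [htop, finrank_map_mkQ_span_singleton_top hv0, finrank_top]
    omega
  · have hvi : v ∉ S i := hv (some ⟨i, htop⟩)
    have := finrank_lt htop
    rw [finrank_map_mkQ_span_singleton_of_notMem hvi]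
    omega

end Submodule

lemma FiniteField.exists_algebra_card_gt (F : Type) [Field F] [Finite F] (N : ℕ) :
    ∃ (F' : Type) (_ : Field F') (_ : Fintype F') (_ : Algebra F F'), N < Fintype.card F' := by
  have : Fact (ringChar F).Prime := ⟨CharP.char_is_prime F _⟩
  refine ⟨Extension F (ringChar F) (N + 1), inferInstance, .ofFinite _, inferInstance, ?_⟩
  rw [Fintype.card_eq_nat_card, natCard_extension]
  calc N < N + 1 := N.lt_succ_self
    _ < Nat.card F ^ (N + 1) := Nat.lt_pow_self Finite.one_lt_card

section Representable

variable {Y : Type}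

lemma isRepresentable_min_finrank_sup [Fintype Y] (F : Type) [Field F] [Fintype F]
    (hF : Fintype.card (Finset Y) + 1 < Fintype.card F) (m : ℕ)
    (W : Type) [AddCommGroup W] [Module F W] [FiniteDimensional F W] (V : Y → Submodule F W) :
    IsRepresentable (fun A : Finset Y => min (finrank F ↥(A.sup V) : ℝ) m) := by
  suffices ∀ (d : ℕ) (W : Type) [AddCommGroup W] [Module F W] [FiniteDimensional F W]
      (V : Y → Submodule F W), finrank F W ≤ d →
      IsRepresentable (fun A : Finset Y => min (finrank F ↥(A.sup V) : ℝ) m) from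
    this _ W V le_rfl
  have hsmall (W : Type) [AddCommGroup W] [Module F W] [FiniteDimensional F W]
      (V : Y → Submodule F W) (hW : finrank F W ≤ m) :
      IsRepresentable (fun A : Finset Y => min (finrank F ↥(A.sup V) : ℝ) m) :=
    ⟨⟨F, W, V, fun A =>
      min_eq_left (by exact_mod_cast (Submodule.finrank_le (A.sup V)).trans hW)⟩⟩
  intro d
  induction d with
  | zero => exact fun W _ _ _ V hW => hsmall W V (by omega)
  | succ d ih =>
    intro W _ _ _ V hW
    by_cases hWm : finrank F W ≤ m
    · exact hsmall W V hWm
    obtain ⟨v, hv0, hv⟩ := Submodule.exists_forall_finrank_map_mkQ_span_singleton_eq_min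
      (fun A : Finset Y => A.sup V) (by rw [ENat.card_eq_coe_fintype_card]; exact_mod_cast hF)
      (by omega)
    have hsup (A : Finset Y) :
        A.sup (fun y => (V y).map (F ∙ v).mkQ) = (A.sup V).map (F ∙ v).mkQ :=
      (Finset.apply_sup_eq_sup_comp _ (fun _ _ => Submodule.map_sup _ _ _)
        (Submodule.map_bot _)).symm
    have hQ : finrank F (W ⧸ (F ∙ v)) ≤ d := by
      rw [Submodule.finrank_quotient, finrank_span_singleton hv0]
      omega
    convert ih (W ⧸ (F ∙ v)) (fun y => (V y).map (F ∙ v).mkQ) hQ using 2 with A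
    rw [hsup, hv A, ← Nat.cast_min, ← Nat.cast_min, min_assoc,
      min_eq_right (by omega : m ≤ finrank F W - 1)]

open TensorProduct in
lemma IsRepresentable.min_natCast [Fintype Y] {g : Finset Y → ℝ} (hg : IsRepresentable g)
    (m : ℕ) : IsRepresentable (fun A => min (g A) m) := by
  obtain ⟨⟨F, W, V, hV⟩⟩ := hg
  obtain ⟨F', _, _, _, hF'⟩ :=
    FiniteField.exists_algebra_card_gt F (Fintype.card (Finset Y) + 1)
  have hsup (A : Finset Y) : A.sup (fun y => (V y).baseChange F') = (A.sup V).baseChange F' :=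
    (Finset.apply_sup_eq_sup_comp _ (Submodule.baseChange_sup F')
      (Submodule.baseChange_bot F')).symm
  convert isRepresentable_min_finrank_sup F' hF' m (F' ⊗[F] W)
    (fun y => (V y).baseChange F') using 3 with A
  rw [hV, hsup, Submodule.finrank_baseChange]

end Representable

section Cone

variable {X Y : Type}

lemma smul_mem_coneHull {S : Set (Finset X → ℝ)} {f : Finset X → ℝ} (hf : f ∈ coneHull S)
    {r : ℝ} (hr : 0 ≤ r) : r • f ∈ coneHull S := by
  obtain ⟨m, a, f, ha, hf, rfl⟩ := hf
  refine ⟨m, fun i => r * a i, f, fun i => mul_nonneg hr (ha i), hf, ?_⟩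
  simp [Finset.smul_sum, smul_smul]

lemma LinearMap.mapsTo_coneHull {S : Set (Finset X → ℝ)} {T : Set (Finset Y → ℝ)}
    (φ : (Finset X → ℝ) →ₗ[ℝ] (Finset Y → ℝ)) (h : Set.MapsTo φ S T) :
    Set.MapsTo φ (coneHull S) (coneHull T) := by
  rintro _ ⟨m, a, f, ha, hf, rfl⟩
  exact ⟨m, a, φ ∘ f, ha, fun i => h (hf i), by simp⟩

lemma sum_mul_nonneg_of_mem_closure_coneHull [Fintype X] (c : Finset X → ℝ)
    {S : Set (Finset X → ℝ)} (hS : ∀ f ∈ S, 0 ≤ ∑ A, c A * f A) {g : Finset X → ℝ}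
    (hg : g ∈ closure (coneHull S)) : 0 ≤ ∑ A, c A * g A := by
  have hcone : ∀ g ∈ coneHull S, 0 ≤ ∑ A, c A * g A := by
    rintro _ ⟨m, a, f, ha, hf, rfl⟩
    have : ∑ A, c A * (∑ i, a i • f i) A = ∑ i, a i * ∑ A, c A * f i A := by
      simp only [Finset.sum_apply, Pi.smul_apply, smul_eq_mul, Finset.mul_sum]
      rw [Finset.sum_comm]
      simp only [mul_left_comm]
    rw [this]
    exact Finset.sum_nonneg fun i _ => mul_nonneg (ha i) (hS _ (hf i))
  have hclosed : IsClosed {g : Finset X → ℝ | 0 ≤ ∑ A, c A * g A} :=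
    isClosed_le continuous_const (by fun_prop)
  exact closure_minimal hcone hclosed hg

lemma min_natCast_eq {s : ℝ} (hs : 0 ≤ s) (k : ℕ) :
    min (k : ℝ) s =
      (1 - (s - ⌊s⌋₊)) * min (k : ℝ) ⌊s⌋₊ + (s - ⌊s⌋₊) * min (k : ℝ) (⌊s⌋₊ + 1) := by
  have h₁ : (⌊s⌋₊ : ℝ) ≤ s := Nat.floor_le hs
  have h₂ : s < ⌊s⌋₊ + 1 := Nat.lt_floor_add_one s
  rcases le_or_gt k ⌊s⌋₊ with hk | hk
  · have hk' : (k : ℝ) ≤ ⌊s⌋₊ := by exact_mod_cast hk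
    rw [min_eq_left (hk'.trans h₁), min_eq_left hk', min_eq_left (by linarith)]
    ring
  · have hk' : (⌊s⌋₊ : ℝ) + 1 ≤ k := by exact_mod_cast hk
    rw [min_eq_right (by linarith), min_eq_right (by linarith), min_eq_right hk']
    ring

lemma IsRepresentable.min_mem_coneHull [Fintype X] {g : Finset X → ℝ} (hg : IsRepresentable g)
    {s : ℝ} (hs : 0 ≤ s) :
    (fun A => min (g A) s) ∈ coneHull {f : Finset X → ℝ | IsRepresentable f} := by
  have h₁ : (⌊s⌋₊ : ℝ) ≤ s := Nat.floor_le hs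
  have h₂ : s < ⌊s⌋₊ + 1 := Nat.lt_floor_add_one s
  refine ⟨2, ![1 - (s - ⌊s⌋₊), s - ⌊s⌋₊],
    ![fun A => min (g A) ⌊s⌋₊, fun A => min (g A) (⌊s⌋₊ + 1 : ℕ)], ?_, ?_, ?_⟩
  · intro i
    fin_cases i <;> simp <;> linarith
  · intro i
    fin_cases i
    exacts [hg.min_natCast _, hg.min_natCast _]
  · obtain ⟨⟨F, W, V, hV⟩⟩ := hg
    funext A
    simp [hV A, min_natCast_eq hs]

lemma IsRepresentable.min_mul_mem_coneHull [Fintype X] {g : Finset X → ℝ}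
    (hg : IsRepresentable g) {a t : ℝ} (ha : 0 < a) (ht : 0 ≤ t) :
    (fun A => min (a * g A) t) ∈ coneHull {f : Finset X → ℝ | IsRepresentable f} := by
  convert smul_mem_coneHull (hg.min_mem_coneHull (div_nonneg ht ha.le)) ha.le using 1
  funext A
  simp [mul_min_of_nonneg _ _ ha.le, mul_div_cancel₀ _ ha.ne']

lemma IsRepresentable.comp_sup [DecidableEq X] {f : Finset X → ℝ} (hf : IsRepresentable f)
    (V : Y → Finset X) : IsRepresentable (fun B : Finset Y => f (B.sup V)) := by
  obtain ⟨⟨F, W, U, hU⟩⟩ := hf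
  refine ⟨⟨F, W, fun y => (V y).sup U, fun B => ?_⟩⟩
  rw [hU, ← Finset.sup_biUnion, Finset.sup_eq_biUnion]

lemma CcRepresentable.comp_sup [DecidableEq X] {h : Finset X → ℝ} (hh : CcRepresentable h)
    (V : Y → Finset X) :
    (fun B : Finset Y => h (B.sup V)) ∈ closure (coneHull {f | IsRepresentable f}) := by
  let φ := LinearMap.funLeft ℝ ℝ (fun B : Finset Y => B.sup V)
  have hφ : Continuous φ := continuous_pi fun B => continuous_apply _
  exact ((φ.mapsTo_coneHull fun f hf => hf.comp_sup V).closure hφ) hh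

end Cone

theorem perturbation_satisfies_valid_rank_inequalities_general
    (n : ℕ) (c : Finset (Fin n) → ℝ)
    (hvalid : ∀ (F : Type) [Field F] [Fintype F]
        (W : Type) [AddCommGroup W] [Module F W] [FiniteDimensional F W]
        (U : Fin n → Submodule F W),
        0 ≤ ∑ α : Finset (Fin n), c α * (Module.finrank F ↥(α.sup U) : ℝ))
    (halmost : ∀ g : Finset (Fin n) → ℝ,
        g ∈ closure (coneHull {f : Finset (Fin n) → ℝ | IsRepresentable f}) →
        AlmostRepresentable g)
    (X : Type) [Fintype X] [DecidableEq X] (h : Finset X → ℝ)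
    (hcc : CcRepresentable h)
    (ε : ℝ) (hε1 : ε ≤ h Finset.univ)
    (V : Fin n → Finset X) :
    0 ≤ ∑ α : Finset (Fin n), c α * min (h (α.sup V)) (h Finset.univ - ε) := by
  have hrep (f : Finset (Fin n) → ℝ) (hf : IsRepresentable f) : 0 ≤ ∑ α, c α * f α := by
    obtain ⟨⟨F, W, U, hU⟩⟩ := hf
    simpa only [hU] using hvalid F W U
  obtain ⟨g, a, hg, ha, hlim⟩ := halmost _ (hcc.comp_sup V)
  have htrunc : (fun α => min (h (α.sup V)) (h Finset.univ - ε)) ∈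
      closure (coneHull {f : Finset (Fin n) → ℝ | IsRepresentable f}) :=
    mem_closure_of_tendsto (tendsto_pi_nhds.2 fun α => (hlim α).min tendsto_const_nhds)
      (Eventually.of_forall fun k => (hg k).min_mul_mem_coneHull (ha k) (by linarith))
  exact sum_mul_nonneg_of_mem_closure_coneHull c hrep htrunc

/-- generalization: fix `n` and coefficients `c_α` (`α ⊆ {1,…,n}`) such
that `∑_α c_α · dim⟨U_i : i∈α⟩ ≥ 0` for every choice of subspaces `U_1, …, U_n` of every
finite-dimensional vector space over every finite field, and suppose every rank function
in the closure of the convex cone generated by `Υ[Fin n]` (the `n`-element ground set)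
is almost representable. Then for every finite ground set `X`, every cc-representable
polymatroid `h` on `X`, every `0 ≤ ε ≤ h(X)` and all subsets `V_1, …, V_n ⊆ X`, the
ε-perturbation `g(A) = min(h(A), h(X) − ε)` satisfies
`∑_α c_α · g(⋃_{i∈α} V_i) ≥ 0`. -/
theorem perturbation_satisfies_valid_rank_inequalities
    (n : ℕ) (c : Finset (Fin n) → ℝ)
    (hvalid : ∀ (F : Type) [Field F] [Fintype F]
        (W : Type) [AddCommGroup W] [Module F W] [FiniteDimensional F W]
        (U : Fin n → Submodule F W),
        0 ≤ ∑ α : Finset (Fin n), c α * (Module.finrank F ↥(α.sup U) : ℝ))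
    (halmost : ∀ g : Finset (Fin n) → ℝ,
        g ∈ closure (coneHull {f : Finset (Fin n) → ℝ | IsRepresentable f}) →
        AlmostRepresentable g)
    (X : Type) [Fintype X] [DecidableEq X] (h : Finset X → ℝ)
    (hpoly : IsPolymatroid h) (hcc : CcRepresentable h)
    (ε : ℝ) (hε0 : 0 ≤ ε) (hε1 : ε ≤ h Finset.univ)
    (V : Fin n → Finset X) :
    0 ≤ ∑ α : Finset (Fin n), c α * min (h (α.sup V)) (h Finset.univ - ε) :=
  perturbation_satisfies_valid_rank_inequalities_general n c hvalid halmost X h hcc ε hε1 V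
end
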